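/- arXiv:gr-qc/0303014 — 8 statements merged into one kernel-verified Lean document; each statement's English description precedes it below -/
import Mathlib

section
/- Suppose φ, y, ρ, H solve the flat scalar-field system on [t₀, ∞) and, in addition: V(φ) ≥ 0 for all φ; V(φ) = 0 if and only if φ = 0; V' is bounded on every subset A ⊆ ℝ on which V is bounded; the Friedmann constraint 3H² = ρ + (1/2)y² + V(φ) holds on [t₀, ∞); and H(t₀) > 0. Then ρ(t) → 0 and y(t) → 0 as t → ∞. -/
/-!
Along a solution, `H' = -f` with `f = y²/2 + γρ/2 ≥ 0`, and the Friedmann constraint (with `γ ≤ 2`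
and `ρ, V ≥ 0`) gives `f ≤ 3H²`, so `H' ≥ -3H²`. Comparing with the solution
`1 / (1 / H(t₀) + 4 (t - t₀))` of a faster Riccati equation keeps `H` positive, so `H` decreases
to a finite limit and `f` has finite integral. The constraint with `0 < H ≤ H(t₀)` bounds `y`, `ρ`
and `V(φ)`, hence `V'(φ)`, hence `f'`. A nonnegative function with bounded derivative and finite
integral tends to `0` (Barbalat), and `f → 0` forces `ρ → 0` and `y → 0`.
-/

open Filter Topology Set

theorem image_sub_le_mul_sub_of_hasDerivWithinAt_Ici {g g' : ℝ → ℝ} {a C x y : ℝ}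
    (hg : ∀ t ∈ Ici a, HasDerivWithinAt g (g' t) (Ici a) t) (hax : a ≤ x) (hxy : x ≤ y)
    (hC : ∀ t ∈ Ico x y, g' t ≤ C) : g y - g x ≤ C * (y - x) := by
  have hsub : Icc x y ⊆ Ici a := fun t ht => hax.trans ht.1
  have key := image_le_of_deriv_right_le_deriv_boundary (a := x) (b := y) (f := g)
    (B := fun t => g x + C * (t - x)) (B' := fun _ => C)
    (fun t ht => (hg t (hsub ht)).continuousWithinAt.mono hsub)
    (fun t ht => (hg t (hsub (Ico_subset_Icc_self ht))).mono
      (Ici_subset_Ici.2 (hax.trans ht.1)))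
    (by simp) (by fun_prop)
    (fun t _ => (((hasDerivAt_id t).sub_const x).const_mul C).const_add (g x)
      |>.hasDerivWithinAt.congr_deriv (mul_one C))
    hC ⟨hxy, le_rfl⟩
  linarith

theorem antitoneOn_Ici_of_hasDerivWithinAt_neg {F f : ℝ → ℝ} {a : ℝ}
    (hF : ∀ t ∈ Ici a, HasDerivWithinAt F (-f t) (Ici a) t) (hf : ∀ t ∈ Ici a, 0 ≤ f t) :
    AntitoneOn F (Ici a) :=
  antitoneOn_of_hasDerivWithinAt_nonpos (convex_Ici a)
    (fun t ht => (hF t ht).continuousWithinAt)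
    (fun t ht => (hF t (interior_subset ht)).mono interior_subset)
    (fun t ht => neg_nonpos.2 (hf t (interior_subset ht)))

theorem AntitoneOn.exists_tendsto_atTop {α β : Type*} [LinearOrder α]
    [ConditionallyCompleteLinearOrder β] [TopologicalSpace β] [OrderTopology β]
    {F : α → β} {a : α} (hF : AntitoneOn F (Ici a)) (hb : BddBelow (F '' Ici a)) :
    ∃ L, Tendsto F atTop (𝓝 L) := by
  have hG : Antitone fun t => F (max a t) := fun s t hst =>
    hF (le_max_left a s) (le_max_left a t) (max_le_max le_rfl hst)
  have hGb : BddBelow (range fun t => F (max a t)) :=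
    hb.mono (range_subset_iff.2 fun t => mem_image_of_mem F (le_max_left a t))
  refine ⟨_, (tendsto_atTop_ciInf hG hGb).congr' ?_⟩
  filter_upwards [eventually_ge_atTop a] with t ht
  rw [max_eq_right ht]

theorem tendsto_zero_of_hasDerivWithinAt_neg_of_abs_deriv_le {F f f' : ℝ → ℝ} {a K : ℝ}
    (hF : ∀ t ∈ Ici a, HasDerivWithinAt F (-f t) (Ici a) t)
    (hf : ∀ t ∈ Ici a, HasDerivWithinAt f (f' t) (Ici a) t)
    (hf0 : ∀ t ∈ Ici a, 0 ≤ f t) (hf'K : ∀ t ∈ Ici a, |f' t| ≤ K)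
    (hFb : BddBelow (F '' Ici a)) : Tendsto f atTop (𝓝 0) := by
  have hK : 0 ≤ K := (abs_nonneg _).trans (hf'K a self_mem_Ici)
  obtain ⟨L, hL⟩ := (antitoneOn_Ici_of_hasDerivWithinAt_neg hF hf0).exists_tendsto_atTop hFb
  refine Metric.tendsto_nhds.2 fun ε hε => ?_
  set δ := ε / (2 * (K + 1)) with hδ_def
  have hδ : 0 < δ := by positivity
  have hKδ : K * δ ≤ ε / 2 := by
    rw [hδ_def, mul_div_assoc', div_le_div_iff₀ (by positivity) two_pos]
    nlinarith
  have hdrop : Tendsto (fun t => F t - F (t + δ)) atTop (𝓝 0) := by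
    simpa using hL.sub (hL.comp (tendsto_atTop_add_const_right _ δ tendsto_id))
  filter_upwards [eventually_ge_atTop a,
    hdrop.eventually (gt_mem_nhds (by positivity : 0 < ε / 2 * δ))] with t ht hsmall
  rw [Real.dist_0_eq_abs, abs_of_nonneg (hf0 t ht)]
  by_contra! hft
  -- `f` cannot fall below `ε / 2` on `[t, t + δ]`, so `F` drops there by at least `ε δ / 2`
  have hlow : ∀ s ∈ Ico t (t + δ), ε / 2 ≤ f s := by
    intro s hs
    have := image_sub_le_mul_sub_of_hasDerivWithinAt_Ici (g := fun x => -f x)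
      (fun x hx => (hf x hx).neg) ht hs.1 (C := K)
      fun x hx => (neg_le_abs _).trans (hf'K x (ht.trans hx.1))
    nlinarith [hs.2]
  have := image_sub_le_mul_sub_of_hasDerivWithinAt_Ici hF ht (by linarith)
    (C := -(ε / 2)) fun s hs => neg_le_neg (hlow s hs)
  linarith

theorem pos_of_hasDerivWithinAt_Ici_of_neg_mul_sq_le {H H' : ℝ → ℝ} {a c : ℝ} (hc : 0 ≤ c)
    (hH : ∀ t ∈ Ici a, HasDerivWithinAt H (H' t) (Ici a) t)
    (hH' : ∀ t ∈ Ici a, -(c * H t ^ 2) ≤ H' t) (ha : 0 < H a) : ∀ t ∈ Ici a, 0 < H t := by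
  intro t ht
  set D : ℝ → ℝ := fun s => (H a)⁻¹ + (c + 1) * (s - a) with hD_def
  have hD : ∀ s ∈ Ici a, 0 < D s := fun s hs => by
    have : 0 ≤ (c + 1) * (s - a) := mul_nonneg (by linarith) (sub_nonneg.2 hs)
    simp only [hD_def]; positivity
  -- `D⁻¹` solves `u' = -(c + 1) u²` with `u a = H a`; the slack `c + 1 > c` makes the
  -- comparison strict
  have key := image_le_of_deriv_right_lt_deriv_boundary' (a := a) (b := t)
    (f := fun s => -H s) (f' := fun s => -H' s)
    (B := fun s => -(D s)⁻¹) (B' := fun s => (c + 1) / D s ^ 2)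
    (fun s hs => (hH s hs.1).continuousWithinAt.neg.mono fun _ h => h.1)
    (fun s hs => (hH s hs.1).neg.mono (Ici_subset_Ici.2 hs.1))
    (by simp [hD_def])
    (ContinuousOn.neg (ContinuousOn.inv₀ (by fun_prop) fun s hs => (hD s hs.1).ne'))
    (fun s hs => by
      have hDs : HasDerivAt D (c + 1) s :=
        ((((hasDerivAt_id s).sub_const a).const_mul (c + 1)).const_add (H a)⁻¹).congr_deriv
          (mul_one _)
      exact (hDs.inv (hD s hs.1).ne').neg.hasDerivWithinAt.congr_deriv (by ring))
    (fun s hs hHs => by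
      have hDs := hD s hs.1
      have hHs' : H s = (D s)⁻¹ := neg_injective hHs
      have := hH' s hs.1
      rw [hHs', inv_pow] at this
      rw [div_eq_mul_inv]
      nlinarith [inv_pos.2 (pow_pos hDs 2)])
    ⟨ht, le_rfl⟩
  have := inv_pos.2 (hD t ht)
  linarith

theorem friedmann_bounds {ρ y v H h : ℝ} (hcon : 3 * H ^ 2 = ρ + 1 / 2 * y ^ 2 + v)
    (hρ : 0 ≤ ρ) (hv : 0 ≤ v) (hH : 0 ≤ H) (hHh : H ≤ h) :
    ρ ≤ 3 * h ^ 2 ∧ |y| ≤ 3 * h ∧ |v| ≤ 3 * h ^ 2 := by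
  have hH2 : H ^ 2 ≤ h ^ 2 := pow_le_pow_left₀ hH hHh 2
  refine ⟨by nlinarith [sq_nonneg y], abs_le_of_sq_le_sq' ?_ (by linarith) |> abs_le.2, ?_⟩
  · nlinarith
  · rw [abs_of_nonneg hv]; nlinarith [sq_nonneg y]

theorem exists_abs_comp_le_of_isBounded_image {V W φ : ℝ → ℝ} {s : Set ℝ} {M : ℝ}
    (hW : ∀ A : Set ℝ, Bornology.IsBounded (V '' A) → Bornology.IsBounded (W '' A))
    (hM : ∀ t ∈ s, |V (φ t)| ≤ M) : ∃ C, ∀ t ∈ s, |W (φ t)| ≤ C := by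
  have hb : Bornology.IsBounded (V '' (φ '' s)) := by
    rw [← image_comp]
    exact isBounded_iff_forall_norm_le.2 ⟨M, forall_mem_image.2 hM⟩
  obtain ⟨C, hC⟩ := (hW _ hb).exists_norm_le
  exact ⟨C, fun t ht => hC _ (mem_image_of_mem W (mem_image_of_mem φ ht))⟩

theorem abs_kinetic_deriv_le {γ y H ρ v h C : ℝ} (hH : 0 ≤ H) (hHh : H ≤ h)
    (hy : |y| ≤ 3 * h) (hρ : 0 ≤ ρ) (hρh : ρ ≤ 3 * h ^ 2) (hv : |v| ≤ C) :
    |y * (-3 * H * y - v) + γ / 2 * (-3 * γ * ρ * H)| ≤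
      27 * h ^ 3 + 3 * h * C + 9 / 2 * γ ^ 2 * h ^ 3 := by
  have hy2 : y ^ 2 ≤ 9 * h ^ 2 := by nlinarith [sq_abs y, abs_nonneg y]
  have h₁ : 0 ≤ 3 * H * y ^ 2 := by positivity
  have h₁' : 3 * H * y ^ 2 ≤ 27 * h ^ 3 := by nlinarith [sq_nonneg y]
  have h₂ : |y * v| ≤ 3 * h * C := by
    rw [abs_mul]; exact mul_le_mul hy hv (abs_nonneg _) ((abs_nonneg _).trans hy)
  have h₃ : 0 ≤ 3 / 2 * γ ^ 2 * (ρ * H) := by positivity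
  have h₃' : 3 / 2 * γ ^ 2 * (ρ * H) ≤ 9 / 2 * γ ^ 2 * h ^ 3 := by
    have : ρ * H ≤ 3 * h ^ 2 * h := mul_le_mul hρh hHh hH (by positivity)
    nlinarith [sq_nonneg γ]
  have e : y * (-3 * H * y - v) + γ / 2 * (-3 * γ * ρ * H) =
      -(3 * H * y ^ 2) - y * v - 3 / 2 * γ ^ 2 * (ρ * H) := by ring
  rw [e, abs_le]
  constructor <;> linarith [abs_le.1 h₂]

theorem tendsto_zero_of_tendsto_half_sq_add {α : Type*} {l : Filter α} {y ρ : α → ℝ} {γ : ℝ}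
    (hγ : 0 < γ) (hρ : ∀ᶠ t in l, 0 ≤ ρ t)
    (h : Tendsto (fun t => 1 / 2 * y t ^ 2 + γ / 2 * ρ t) l (𝓝 0)) :
    Tendsto ρ l (𝓝 0) ∧ Tendsto y l (𝓝 0) := by
  constructor
  · refine squeeze_zero' hρ ?_ (by simpa only [mul_zero] using h.const_mul (2 / γ))
    filter_upwards with t
    have : 0 ≤ y t ^ 2 / γ := by positivity
    have : 2 / γ * (1 / 2 * y t ^ 2 + γ / 2 * ρ t) = y t ^ 2 / γ + ρ t := by field_simp
    linarith
  · have hy2 : Tendsto (fun t => y t ^ 2) l (𝓝 0) := by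
      refine squeeze_zero' (.of_forall fun t => sq_nonneg _) ?_
        (by simpa only [mul_zero] using h.const_mul 2)
      filter_upwards [hρ] with t ht
      nlinarith
    exact (tendsto_zero_iff_abs_tendsto_zero y).2
      (by simpa [Real.sqrt_sq_eq_abs, Function.comp_def] using hy2.sqrt)

theorem stmt_1_general (t₀ γ : ℝ) (hγ0 : 0 < γ) (hγ2 : γ ≤ 2)
    (V : ℝ → ℝ)
    (φ y ρ H : ℝ → ℝ)
    (hy : ∀ t ∈ Set.Ici t₀,
      HasDerivWithinAt y (-3 * H t * y t - deriv V (φ t)) (Set.Ici t₀) t)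
    (hρ : ∀ t ∈ Set.Ici t₀, HasDerivWithinAt ρ (-3 * γ * ρ t * H t) (Set.Ici t₀) t)
    (hH : ∀ t ∈ Set.Ici t₀,
      HasDerivWithinAt H (-(1 / 2) * y t ^ 2 - γ / 2 * ρ t) (Set.Ici t₀) t)
    (hρ0 : ∀ t ∈ Set.Ici t₀, 0 ≤ ρ t)
    (hcon : ∀ t ∈ Set.Ici t₀, 3 * H t ^ 2 = ρ t + 1 / 2 * y t ^ 2 + V (φ t))
    (hVnn : ∀ s : ℝ, 0 ≤ V s)
    (hV'bdd : ∀ A : Set ℝ, Bornology.IsBounded (V '' A) →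
      Bornology.IsBounded (deriv V '' A))
    (hH0 : 0 < H t₀) :
    Tendsto ρ atTop (nhds 0) ∧ Tendsto y atTop (nhds 0) := by
  set f : ℝ → ℝ := fun t => 1 / 2 * y t ^ 2 + γ / 2 * ρ t
  have hH' : ∀ t ∈ Ici t₀, HasDerivWithinAt H (-f t) (Ici t₀) t :=
    fun t ht => (hH t ht).congr_deriv (by ring)
  have hf0 : ∀ t ∈ Ici t₀, 0 ≤ f t := fun t ht => by have := hρ0 t ht; positivity
  have hHpos := pos_of_hasDerivWithinAt_Ici_of_neg_mul_sq_le (c := 3) (by norm_num) hH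
    (fun t ht => by
      nlinarith [hcon t ht, hVnn (φ t), mul_le_mul_of_nonneg_right hγ2 (hρ0 t ht)]) hH0
  have hHle : ∀ t ∈ Ici t₀, H t ≤ H t₀ := fun t ht =>
    antitoneOn_Ici_of_hasDerivWithinAt_neg hH' hf0 self_mem_Ici ht ht
  have hbd := fun t ht =>
    friedmann_bounds (hcon t ht) (hρ0 t ht) (hVnn _) (hHpos t ht).le (hHle t ht)
  obtain ⟨C, hC⟩ := exists_abs_comp_le_of_isBounded_image hV'bdd fun t ht => (hbd t ht).2.2
  have hf' : ∀ t ∈ Ici t₀, HasDerivWithinAt f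
      (y t * (-3 * H t * y t - deriv V (φ t)) + γ / 2 * (-3 * γ * ρ t * H t)) (Ici t₀) t :=
    fun t ht => (((hy t ht).pow 2).const_mul (1 / 2)).add ((hρ t ht).const_mul (γ / 2))
      |>.congr_deriv (by push_cast; ring)
  have hf : Tendsto f atTop (𝓝 0) :=
    tendsto_zero_of_hasDerivWithinAt_neg_of_abs_deriv_le hH' hf' hf0
      (fun t ht => abs_kinetic_deriv_le (hHpos t ht).le (hHle t ht) (hbd t ht).2.1 (hρ0 t ht)
        (hbd t ht).1 (hC t ht))
      ⟨0, forall_mem_image.2 fun t ht => (hHpos t ht).le⟩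
  exact tendsto_zero_of_tendsto_half_sq_add hγ0 ((eventually_ge_atTop t₀).mono hρ0) hf

/-- Proposition 2: for the flat scalar-field system with a non-negative potential having a
unique zero at `φ = 0`, with `V'` bounded wherever `V` is bounded, and an initially
expanding universe (`H(t₀) > 0`), the matter density `ρ` and the field velocity `y = φ̇`
tend to zero as `t → ∞`. -/
theorem stmt_1 (t₀ γ : ℝ) (hγ0 : 0 < γ) (hγ2 : γ ≤ 2)
    (V : ℝ → ℝ) (hV : ContDiff ℝ 2 V)
    (φ y ρ H : ℝ → ℝ)
    (hφ : ∀ t ∈ Set.Ici t₀, HasDerivWithinAt φ (y t) (Set.Ici t₀) t)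
    (hy : ∀ t ∈ Set.Ici t₀,
      HasDerivWithinAt y (-3 * H t * y t - deriv V (φ t)) (Set.Ici t₀) t)
    (hρ : ∀ t ∈ Set.Ici t₀, HasDerivWithinAt ρ (-3 * γ * ρ t * H t) (Set.Ici t₀) t)
    (hH : ∀ t ∈ Set.Ici t₀,
      HasDerivWithinAt H (-(1 / 2) * y t ^ 2 - γ / 2 * ρ t) (Set.Ici t₀) t)
    (hρ0 : ∀ t ∈ Set.Ici t₀, 0 ≤ ρ t)
    (hcon : ∀ t ∈ Set.Ici t₀, 3 * H t ^ 2 = ρ t + 1 / 2 * y t ^ 2 + V (φ t))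
    (hVnn : ∀ s : ℝ, 0 ≤ V s)
    (hVzero : ∀ s : ℝ, V s = 0 ↔ s = 0)
    (hV'bdd : ∀ A : Set ℝ, Bornology.IsBounded (V '' A) →
      Bornology.IsBounded (deriv V '' A))
    (hH0 : 0 < H t₀) :
    Tendsto ρ atTop (nhds 0) ∧ Tendsto y atTop (nhds 0) :=
  stmt_1_general t₀ γ hγ0 hγ2 V φ y ρ H hy hρ hH hρ0 hcon hVnn hV'bdd hH0
end

section
/- Suppose φ, y, ρ, H solve the flat scalar-field system on [t₀, ∞) with the Friedmann constraint 3H² = ρ + (1/2)y² + V(φ), H(t₀) > 0, and the potential satisfies: V(φ) ≥ 0 for all φ; V(φ) = 0 if and only if φ = 0; V' is bounded on every subset A ⊆ ℝ on which V is bounded; V'(φ) > 0 for φ > 0; and V'(φ) < 0 for φ < 0. Then as t → ∞, exactly one of the following holds: φ(t) → +∞, or φ(t) → -∞, or φ(t) → 0. -/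
/-!
If `H` ever vanishes, the constraint gives `|H'| ≤ 3 H²` (this is where `γ ≤ 2` enters),
so by Grönwall `H` stays `0`; the constraint then forces `V (φ) = 0`, i.e. `φ = 0`.

Otherwise `H > 0`, and both `H` and the energy `E = y² / 2 + V (φ)` decrease, since
`E' = -3 H y²`. If `E → 0` then `V (φ) → 0`, hence `φ → 0`. If `E → l > 0`, the constraint
keeps `H ≥ h > 0`, so `E' ≤ -3 h y²`; as `y'` is bounded (`V'` is bounded on the sublevel set
`V ≤ E (t₀)`), `y → 0` and `V (φ) → l`. Then `φ` eventually keeps one sign, and by monotonicity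
of `V` on that side either `|φ| → ∞` or `φ → c` with `V (c) = l`. The latter would give
`y' → -V' (c) ≠ 0`, contradicting `y → 0`.
-/

open Filter Set Topology

lemma image_sub_le_mul_sub_of_hasDerivWithinAt_Ici_s2 {f f' : ℝ → ℝ} {a m s t : ℝ}
    (hf : ∀ x ∈ Ici a, HasDerivWithinAt f (f' x) (Ici a) x) (has : a ≤ s) (hst : s ≤ t)
    (hbound : ∀ x ∈ Ico s t, f' x ≤ m) : f t - f s ≤ m * (t - s) := by
  have hcont : ContinuousOn f (Icc s t) := fun x hx =>
    (hf x (has.trans hx.1)).continuousWithinAt.mono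
      (Icc_subset_Ici_self.trans (Ici_subset_Ici.2 has))
  have hright : ∀ x ∈ Ico s t, HasDerivWithinAt f (f' x) (Ici x) x := fun x hx =>
    (hf x (has.trans hx.1)).mono (Ici_subset_Ici.2 (has.trans hx.1))
  have hline : ∀ x, HasDerivWithinAt (fun x => f s + m * (x - s)) m (Ici x) x := fun x => by
    simpa using (((hasDerivAt_id x).sub_const s).const_mul m).const_add (f s) |>.hasDerivWithinAt
  have := image_le_of_deriv_right_le_deriv_boundary hcont hright (by simp) (by fun_prop)
    (fun x _ => hline x) hbound ⟨hst, le_rfl⟩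
  linarith

lemma antitoneOn_Ici_of_hasDerivWithinAt_nonpos {f f' : ℝ → ℝ} {a : ℝ}
    (hf : ∀ x ∈ Ici a, HasDerivWithinAt f (f' x) (Ici a) x) (hf' : ∀ x ∈ Ici a, f' x ≤ 0) :
    AntitoneOn f (Ici a) := fun s hs t _ hst => by
  have := image_sub_le_mul_sub_of_hasDerivWithinAt_Ici_s2 hf hs hst fun x hx =>
    hf' x (le_trans hs hx.1)
  linarith

lemma AntitoneOn.exists_tendsto_of_forall_le {f : ℝ → ℝ} {a c : ℝ}
    (hf : AntitoneOn f (Ici a)) (hc : ∀ t ∈ Ici a, c ≤ f t) :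
    ∃ l, c ≤ l ∧ Tendsto f atTop (𝓝 l) ∧ ∀ t ∈ Ici a, l ≤ f t := by
  set g : ℝ → ℝ := fun t => f (max t a)
  have hg : Antitone g := fun s t hst =>
    hf (le_max_right s a) (le_max_right t a) (max_le_max hst le_rfl)
  have hgc : ∀ t, c ≤ g t := fun t => hc _ (le_max_right t a)
  have hbdd : BddBelow (range g) := ⟨c, by rintro _ ⟨t, rfl⟩; exact hgc t⟩
  have hfg : ∀ t ∈ Ici a, g t = f t := fun t ht => by simp [g, max_eq_left (show a ≤ t from ht)]
  refine ⟨⨅ t, g t, le_ciInf hgc, ?_, fun t ht => hfg t ht ▸ ciInf_le hbdd t⟩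
  exact (tendsto_atTop_ciInf hg hbdd).congr' (eventually_atTop.2 ⟨a, hfg⟩)

lemma tendsto_atBot_of_hasDerivWithinAt_of_tendsto_neg {y y' : ℝ → ℝ} {a L : ℝ}
    (hy : ∀ t ∈ Ici a, HasDerivWithinAt y (y' t) (Ici a) t) (hy' : Tendsto y' atTop (𝓝 L))
    (hL : L < 0) : Tendsto y atTop atBot := by
  obtain ⟨T, hT⟩ := eventually_atTop.1
    ((hy'.eventually_le_const (by linarith : L < L / 2)).and (eventually_ge_atTop a))
  have hline : Tendsto (fun t => y T + L / 2 * (t - T)) atTop atBot :=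
    tendsto_atBot_add_const_left _ _
      ((tendsto_atTop_add_const_right _ _ tendsto_id).const_mul_atTop_of_neg (by linarith))
  refine tendsto_atBot_mono' _ (eventually_atTop.2 ⟨T, fun t ht => ?_⟩) hline
  have := image_sub_le_mul_sub_of_hasDerivWithinAt_Ici_s2 hy (hT T le_rfl).2 ht fun x hx =>
    (hT x hx.1).1
  linarith

lemma tendsto_zero_of_hasDerivWithinAt_le_neg_mul_sq {E E' y y' : ℝ → ℝ} {a c C l : ℝ}
    (hc : 0 < c) (hy : ∀ t ∈ Ici a, HasDerivWithinAt y (y' t) (Ici a) t)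
    (hy' : ∀ t ∈ Ici a, |y' t| ≤ C) (hE : ∀ t ∈ Ici a, HasDerivWithinAt E (E' t) (Ici a) t)
    (hE' : ∀ t ∈ Ici a, E' t ≤ -c * y t ^ 2) (hEl : Tendsto E atTop (𝓝 l)) :
    Tendsto y atTop (𝓝 0) := by
  rw [Metric.tendsto_atTop]
  intro ε hε
  set δ := ε / (2 * (|C| + 1))
  have hδ : 0 < δ := by positivity
  have hCδ : C * δ ≤ ε / 2 := by
    have : (|C| + 1) * δ = ε / 2 := by simp only [δ]; field_simp
    nlinarith [le_abs_self C]
  have hdrop : Tendsto (fun t => E t - E (t + δ)) atTop (𝓝 0) := by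
    simpa using hEl.sub (hEl.comp (tendsto_atTop_add_const_right _ δ tendsto_id))
  obtain ⟨N, hN⟩ := eventually_atTop.1
    ((hdrop.eventually_lt_const (by positivity : 0 < c * (ε / 2) ^ 2 * δ)).and
      (eventually_ge_atTop a))
  refine ⟨N, fun t ht => ?_⟩
  obtain ⟨hdropt, hat⟩ := hN t ht
  by_contra! hyt
  rw [Real.dist_eq, sub_zero] at hyt
  -- On `[t, t + δ]` the Lipschitz bound keeps `|y| ≥ ε / 2`, so `E` drops by `c (ε / 2)² δ`.
  have hlarge : ∀ s ∈ Ico t (t + δ), (ε / 2) ^ 2 ≤ y s ^ 2 := fun s hs => by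
    have hlip := Convex.norm_image_sub_le_of_norm_hasDerivWithin_le hy hy' (convex_Ici a) hat
      (show s ∈ Ici a from hat.trans hs.1)
    rw [Real.norm_eq_abs, Real.norm_eq_abs, abs_of_nonneg (sub_nonneg.2 hs.1)] at hlip
    have hCst : C * (s - t) ≤ C * δ :=
      mul_le_mul_of_nonneg_left (by linarith [hs.2]) ((abs_nonneg _).trans (hy' t hat))
    have : ε / 2 ≤ |y s| := by
      linarith [abs_sub_abs_le_abs_sub (y t) (y s), abs_sub_comm (y s) (y t)]
    rw [← sq_abs (y s)]
    exact pow_le_pow_left₀ (by positivity) this 2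
  have := image_sub_le_mul_sub_of_hasDerivWithinAt_Ici_s2 hE hat (by linarith : t ≤ t + δ)
    (m := -c * (ε / 2) ^ 2) fun s hs =>
      (hE' s (hat.trans hs.1)).trans (by nlinarith [hlarge s hs])
  nlinarith

lemma tendsto_nhds_of_tendsto_comp_of_strictMonoOn_Ici {V φ : ℝ → ℝ} {c : ℝ}
    (hV : StrictMonoOn V (Ici 0)) (hc : 0 ≤ c) (hφ : ∀ᶠ t in atTop, 0 ≤ φ t)
    (hlim : Tendsto (fun t => V (φ t)) atTop (𝓝 (V c))) : Tendsto φ atTop (𝓝 c) := by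
  refine tendsto_order.2 ⟨fun a ha => ?_, fun b hb => ?_⟩
  · rcases lt_or_ge a 0 with ha0 | ha0
    · filter_upwards [hφ] with t ht using ha0.trans_le ht
    · filter_upwards [hφ, hlim.eventually_const_lt (hV ha0 hc ha)] with t ht hVt
      exact (hV.lt_iff_lt ha0 ht).1 hVt
  · have hb0 : 0 ≤ b := hc.trans hb.le
    filter_upwards [hφ, hlim.eventually_lt_const (hV hc hb0 hb)] with t ht hVt
    exact (hV.lt_iff_lt ht hb0).1 hVt

lemma tendsto_zero_of_tendsto_comp_of_strictMonoOn_of_strictAntiOn {V φ : ℝ → ℝ}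
    (hVpos : StrictMonoOn V (Ici 0)) (hVneg : StrictAntiOn V (Iic 0))
    (hlim : Tendsto (fun t => V (φ t)) atTop (𝓝 (V 0))) : Tendsto φ atTop (𝓝 0) := by
  refine tendsto_order.2 ⟨fun a ha => ?_, fun b hb => ?_⟩
  · filter_upwards [hlim.eventually_lt_const (hVneg ha.le self_mem_Iic ha)] with t hVt
    by_contra! h
    exact hVt.not_ge (hVneg.antitoneOn (h.trans ha.le) ha.le h)
  · filter_upwards [hlim.eventually_lt_const (hVpos self_mem_Ici hb.le hb)] with t hVt
    by_contra! h
    exact hVt.not_ge (hVpos.monotoneOn hb.le (hb.le.trans h) h)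

lemma tendsto_atTop_or_exists_tendsto_of_strictMonoOn_Ici {V φ : ℝ → ℝ} {l : ℝ}
    (hVc : Continuous V) (hV : StrictMonoOn V (Ici 0)) (hl : V 0 < l)
    (hφ : ∀ᶠ t in atTop, 0 ≤ φ t) (hlim : Tendsto (fun t => V (φ t)) atTop (𝓝 l)) :
    Tendsto φ atTop atTop ∨ ∃ c, 0 < c ∧ Tendsto φ atTop (𝓝 c) := by
  by_cases hreach : ∃ s, 0 ≤ s ∧ l ≤ V s
  · obtain ⟨s, hs, hls⟩ := hreach
    obtain ⟨c, hc, rfl⟩ := intermediate_value_Icc hs hVc.continuousOn ⟨hl.le, hls⟩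
    refine Or.inr ⟨c, hc.1.lt_of_ne ?_,
      tendsto_nhds_of_tendsto_comp_of_strictMonoOn_Ici hV hc.1 hφ hlim⟩
    rintro rfl
    exact hl.false
  · push Not at hreach
    refine Or.inl (tendsto_atTop.2 fun M => ?_)
    have hM : 0 ≤ max M 0 := le_max_right M 0
    filter_upwards [hφ, hlim.eventually_const_lt (hreach _ hM)] with t ht hVt
    exact (le_max_left M 0).trans ((hV.lt_iff_lt hM ht).1 hVt).le

lemma eventually_pos_or_eventually_neg_of_continuousOn {φ : ℝ → ℝ} {a : ℝ}
    (hφ : ContinuousOn φ (Ici a)) (hne : ∀ᶠ t in atTop, φ t ≠ 0) :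
    (∀ᶠ t in atTop, 0 < φ t) ∨ ∀ᶠ t in atTop, φ t < 0 := by
  obtain ⟨T, hT⟩ := eventually_atTop.1 (hne.and (eventually_ge_atTop a))
  have hconn : IsPreconnected (φ '' Ici T) :=
    isPreconnected_Ici.image φ (hφ.mono (Ici_subset_Ici.2 (hT T le_rfl).2))
  have h0 : (0 : ℝ) ∉ φ '' Ici T := fun ⟨t, ht, h⟩ => (hT t ht).1 h
  have hmem : ∀ t ≥ T, φ t ∈ φ '' Ici T := fun t ht => mem_image_of_mem φ ht
  rcases (hT T le_rfl).1.lt_or_gt with hneg | hpos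
  · refine Or.inr (eventually_atTop.2 ⟨T, fun t ht => ?_⟩)
    by_contra! h
    exact h0 (hconn.Icc_subset (hmem T le_rfl) (hmem t ht) ⟨hneg.le, h⟩)
  · refine Or.inl (eventually_atTop.2 ⟨T, fun t ht => ?_⟩)
    by_contra! h
    exact h0 (hconn.Icc_subset (hmem t ht) (hmem T le_rfl) ⟨h, hpos.le⟩)

lemma exclusive_of_tendsto_atTop_or_atBot_or_nhds {φ : ℝ → ℝ} {c : ℝ}
    (h : Tendsto φ atTop atTop ∨ Tendsto φ atTop atBot ∨ Tendsto φ atTop (𝓝 c)) :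
    (Tendsto φ atTop atTop ∧ ¬ Tendsto φ atTop atBot ∧ ¬ Tendsto φ atTop (𝓝 c)) ∨
    (Tendsto φ atTop atBot ∧ ¬ Tendsto φ atTop atTop ∧ ¬ Tendsto φ atTop (𝓝 c)) ∨
    (Tendsto φ atTop (𝓝 c) ∧ ¬ Tendsto φ atTop atTop ∧ ¬ Tendsto φ atTop atBot) := by
  have hdisj : Disjoint (atTop : Filter ℝ) atBot := disjoint_atTop_atBot
  rcases h with h | h | h
  · exact Or.inl ⟨h, h.not_tendsto hdisj, fun h' => not_tendsto_atTop_of_tendsto_nhds h' h⟩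
  · exact Or.inr (Or.inl ⟨h, h.not_tendsto hdisj.symm,
      fun h' => not_tendsto_atBot_of_tendsto_nhds h' h⟩)
  · exact Or.inr (Or.inr ⟨h, not_tendsto_atTop_of_tendsto_nhds h,
      not_tendsto_atBot_of_tendsto_nhds h⟩)

lemma tendsto_atTop_of_eventually_pos {a l : ℝ} {V V' φ y g : ℝ → ℝ}
    (hVc : Continuous V) (hV : StrictMonoOn V (Ici 0)) (hV'c : Continuous V')
    (hV'pos : ∀ s, 0 < s → 0 < V' s) (hl : V 0 < l)
    (hy : ∀ t ∈ Ici a, HasDerivWithinAt y (g t - V' (φ t)) (Ici a) t)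
    (hg : Tendsto g atTop (𝓝 0)) (hy0 : Tendsto y atTop (𝓝 0))
    (hVφ : Tendsto (fun t => V (φ t)) atTop (𝓝 l)) (hφ : ∀ᶠ t in atTop, 0 < φ t) :
    Tendsto φ atTop atTop := by
  refine (tendsto_atTop_or_exists_tendsto_of_strictMonoOn_Ici hVc hV hl
    (hφ.mono fun _ => le_of_lt) hVφ).resolve_right ?_
  rintro ⟨c, hc, hφc⟩
  have hy' : Tendsto (fun t => g t - V' (φ t)) atTop (𝓝 (0 - V' c)) :=
    hg.sub ((hV'c.tendsto c).comp hφc)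
  exact not_tendsto_atBot_of_tendsto_nhds hy0
    (tendsto_atBot_of_hasDerivWithinAt_of_tendsto_neg hy hy' (by linarith [hV'pos c hc]))

lemma tendsto_atTop_or_atBot_of_tendsto_comp_pos {a l : ℝ} {V V' φ y g : ℝ → ℝ}
    (hVc : Continuous V) (hVpos : StrictMonoOn V (Ici 0)) (hVneg : StrictAntiOn V (Iic 0))
    (hV'c : Continuous V') (hV'pos : ∀ s, 0 < s → 0 < V' s) (hV'neg : ∀ s, s < 0 → V' s < 0)
    (hl : V 0 < l) (hφ : ContinuousOn φ (Ici a))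
    (hy : ∀ t ∈ Ici a, HasDerivWithinAt y (g t - V' (φ t)) (Ici a) t)
    (hg : Tendsto g atTop (𝓝 0)) (hy0 : Tendsto y atTop (𝓝 0))
    (hVφ : Tendsto (fun t => V (φ t)) atTop (𝓝 l)) :
    Tendsto φ atTop atTop ∨ Tendsto φ atTop atBot := by
  have hne : ∀ᶠ t in atTop, φ t ≠ 0 :=
    (hVφ.eventually_const_lt hl).mono fun t ht h => by rw [h] at ht; exact ht.false
  rcases eventually_pos_or_eventually_neg_of_continuousOn hφ hne with hpos | hneg
  · exact Or.inl (tendsto_atTop_of_eventually_pos hVc hVpos hV'c hV'pos hl hy hg hy0 hVφ hpos)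
  · refine Or.inr (tendsto_neg_atTop_iff.1 ?_)
    refine tendsto_atTop_of_eventually_pos (V := fun s => V (-s)) (V' := fun s => -V' (-s))
      (y := fun t => -y t) (g := fun t => -g t) (hVc.comp continuous_neg)
      (fun s hs t ht hst =>
        hVneg (mem_Iic.2 (neg_nonpos.2 ht)) (mem_Iic.2 (neg_nonpos.2 hs)) (neg_lt_neg hst))
      (hV'c.comp continuous_neg).neg (fun s hs => neg_pos.2 (hV'neg _ (neg_lt_zero.2 hs)))
      (by simpa using hl) (fun t ht => (hy t ht).neg.congr_deriv (by simp only [neg_neg]; ring))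
      (by simpa using hg.neg) (by simpa using hy0.neg) (by simpa using hVφ)
      (hneg.mono fun _ => neg_pos.2)

lemma hubble_eq_zero_of_eq_zero {t₀ t₁ γ : ℝ} {V φ y ρ H : ℝ → ℝ} (hγ0 : 0 < γ)
    (hγ2 : γ ≤ 2)
    (hH : ∀ t ∈ Ici t₀, HasDerivWithinAt H (-(1 / 2) * y t ^ 2 - γ / 2 * ρ t) (Ici t₀) t)
    (hρ0 : ∀ t ∈ Ici t₀, 0 ≤ ρ t)
    (hcon : ∀ t ∈ Ici t₀, 3 * H t ^ 2 = ρ t + 1 / 2 * y t ^ 2 + V (φ t))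
    (hVnn : ∀ s, 0 ≤ V s) (ht₁ : t₀ ≤ t₁) (hH₁ : H t₁ = 0) : ∀ t ∈ Ici t₁, H t = 0 := by
  intro b hb
  have hsub : Icc t₁ b ⊆ Ici t₀ := Icc_subset_Ici_self.trans (Ici_subset_Ici.2 ht₁)
  have hcont : ContinuousOn H (Icc t₁ b) := fun t ht =>
    (hH t (hsub ht)).continuousWithinAt.mono hsub
  obtain ⟨C, hC⟩ := isCompact_Icc.exists_bound_of_continuousOn hcont
  have hbound : ∀ t ∈ Icc t₁ b, |-(1 / 2) * y t ^ 2 - γ / 2 * ρ t| ≤ 3 * C * |H t| := by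
    intro t ht
    have hHC : |H t| ≤ C := hC t ht
    have hρ0t := hρ0 t (hsub ht)
    rw [abs_of_nonpos (by nlinarith)]
    nlinarith [hcon t (hsub ht), hVnn (φ t), sq_abs (H t), abs_nonneg (H t)]
  refine eq_zero_of_abs_deriv_le_mul_abs_self_of_eq_zero_right hcont (fun t ht => ?_) hH₁
    (fun t ht => hbound t (Ico_subset_Icc_self ht)) b ⟨hb, le_rfl⟩
  have ht₀ := hsub (Ico_subset_Icc_self ht)
  exact (hH t ht₀).mono (Ici_subset_Ici.2 ht₀)

lemma hasDerivWithinAt_energy {t₀ : ℝ} {V φ y H : ℝ → ℝ} (hVd : Differentiable ℝ V)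
    (hφ : ∀ t ∈ Ici t₀, HasDerivWithinAt φ (y t) (Ici t₀) t)
    (hy : ∀ t ∈ Ici t₀, HasDerivWithinAt y (-3 * H t * y t - deriv V (φ t)) (Ici t₀) t) :
    ∀ t ∈ Ici t₀, HasDerivWithinAt (fun t => 1 / 2 * y t ^ 2 + V (φ t))
      (-3 * H t * y t ^ 2) (Ici t₀) t := fun t ht =>
  (((hy t ht).pow 2).const_mul (1 / 2)).add
    ((hVd (φ t)).hasDerivAt.comp_hasDerivWithinAt t (hφ t ht)) |>.congr_deriv (by push_cast; ring)

lemma exists_abs_deriv_le_of_energy_le {t₀ E₀ B : ℝ} {V V' φ y H : ℝ → ℝ}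
    (hV'bdd : ∀ A : Set ℝ, Bornology.IsBounded (V '' A) → Bornology.IsBounded (V' '' A))
    (hVnn : ∀ s, 0 ≤ V s) (hE : ∀ t ∈ Ici t₀, 1 / 2 * y t ^ 2 + V (φ t) ≤ E₀)
    (hH : ∀ t ∈ Ici t₀, |H t| ≤ B) :
    ∃ C, ∀ t ∈ Ici t₀, |-3 * H t * y t - V' (φ t)| ≤ C := by
  have hVbdd : Bornology.IsBounded (V '' (φ '' Ici t₀)) := by
    refine (Metric.isBounded_Icc 0 E₀).subset ?_
    rintro _ ⟨_, ⟨t, ht, rfl⟩, rfl⟩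
    exact ⟨hVnn _, by nlinarith [hE t ht, sq_nonneg (y t)]⟩
  obtain ⟨K, hK⟩ := isBounded_iff_forall_norm_le.1 (hV'bdd _ hVbdd)
  refine ⟨3 * B * (1 / 2 + E₀) + K, fun t ht => ?_⟩
  have hV't : |V' (φ t)| ≤ K := hK _ ⟨φ t, mem_image_of_mem φ ht, rfl⟩
  have hy : |y t| ≤ 1 / 2 + E₀ := by
    nlinarith [hE t ht, hVnn (φ t), sq_abs (y t), sq_nonneg (|y t| - 1)]
  have hHy : |H t| * |y t| ≤ B * (1 / 2 + E₀) :=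
    mul_le_mul (hH t ht) hy (abs_nonneg _) ((abs_nonneg _).trans (hH t ht))
  calc |-3 * H t * y t - V' (φ t)| ≤ 3 * (|H t| * |y t|) + |V' (φ t)| := by
        simpa [abs_mul, mul_assoc] using abs_sub (-3 * H t * y t) (V' (φ t))
    _ ≤ 3 * B * (1 / 2 + E₀) + K := by linarith

lemma tendsto_of_hubble_pos {t₀ γ : ℝ} {V φ y ρ H : ℝ → ℝ} (hγ0 : 0 < γ)
    (hVd : Differentiable ℝ V) (hV'c : Continuous (deriv V))
    (hφ : ∀ t ∈ Ici t₀, HasDerivWithinAt φ (y t) (Ici t₀) t)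
    (hy : ∀ t ∈ Ici t₀, HasDerivWithinAt y (-3 * H t * y t - deriv V (φ t)) (Ici t₀) t)
    (hH : ∀ t ∈ Ici t₀, HasDerivWithinAt H (-(1 / 2) * y t ^ 2 - γ / 2 * ρ t) (Ici t₀) t)
    (hρ0 : ∀ t ∈ Ici t₀, 0 ≤ ρ t)
    (hcon : ∀ t ∈ Ici t₀, 3 * H t ^ 2 = ρ t + 1 / 2 * y t ^ 2 + V (φ t))
    (hVnn : ∀ s, 0 ≤ V s) (hV0 : V 0 = 0)
    (hV'bdd : ∀ A : Set ℝ, Bornology.IsBounded (V '' A) →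
      Bornology.IsBounded (deriv V '' A))
    (hVpos : StrictMonoOn V (Ici 0)) (hVneg : StrictAntiOn V (Iic 0))
    (hV'pos : ∀ s, 0 < s → 0 < deriv V s) (hV'neg : ∀ s, s < 0 → deriv V s < 0)
    (hHpos : ∀ t ∈ Ici t₀, 0 < H t) :
    Tendsto φ atTop atTop ∨ Tendsto φ atTop atBot ∨ Tendsto φ atTop (𝓝 0) := by
  set E := fun t => 1 / 2 * y t ^ 2 + V (φ t) with hE_def
  have hE := hasDerivWithinAt_energy hVd hφ hy
  have hEanti : AntitoneOn E (Ici t₀) := antitoneOn_Ici_of_hasDerivWithinAt_nonpos hE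
    fun t ht => by nlinarith [hHpos t ht, sq_nonneg (y t)]
  obtain ⟨l, hl0, hEl, -⟩ := hEanti.exists_tendsto_of_forall_le (c := 0)
    fun t _ => add_nonneg (by positivity) (hVnn _)
  have hHanti : AntitoneOn H (Ici t₀) := antitoneOn_Ici_of_hasDerivWithinAt_nonpos hH
    fun t ht => by nlinarith [hρ0 t ht, sq_nonneg (y t)]
  obtain ⟨h, hh0, hHh, hHge⟩ := hHanti.exists_tendsto_of_forall_le (c := 0)
    fun t ht => (hHpos t ht).le
  rcases hl0.eq_or_lt with rfl | hl
  · refine Or.inr (Or.inr (tendsto_zero_of_tendsto_comp_of_strictMonoOn_of_strictAntiOn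
      hVpos hVneg ?_))
    rw [hV0]
    exact squeeze_zero (fun t => hVnn _) (fun t => le_add_of_nonneg_left (by positivity)) hEl
  have hh : 0 < h := by
    have hρlim : Tendsto (fun t => 3 * H t ^ 2 - E t) atTop (𝓝 (3 * h ^ 2 - l)) :=
      ((hHh.pow 2).const_mul 3).sub hEl
    have : 0 ≤ 3 * h ^ 2 - l := ge_of_tendsto hρlim <| eventually_atTop.2
      ⟨t₀, fun t ht => by simp only [hE_def]; linarith [hcon t ht, hρ0 t ht]⟩
    nlinarith
  obtain ⟨C, hC⟩ := exists_abs_deriv_le_of_energy_le hV'bdd hVnn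
    (fun t ht => hEanti self_mem_Ici ht ht) (B := H t₀)
    fun t ht => (abs_of_pos (hHpos t ht)).trans_le (hHanti self_mem_Ici ht ht)
  have hy0 : Tendsto y atTop (𝓝 0) := tendsto_zero_of_hasDerivWithinAt_le_neg_mul_sq
    (by positivity : 0 < 3 * h) hy hC hE
    (fun t ht => by nlinarith [hHge t ht, sq_nonneg (y t)]) hEl
  have hVφ : Tendsto (fun t => V (φ t)) atTop (𝓝 l) := by
    convert hEl.sub ((hy0.pow 2).const_mul (1 / 2)) using 2
    · simp only [hE_def]; ring
    · simp
  have hg : Tendsto (fun t => -3 * H t * y t) atTop (𝓝 0) := by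
    simpa using (hHh.const_mul (-3)).mul hy0
  have hφc : ContinuousOn φ (Ici t₀) := fun t ht => (hφ t ht).continuousWithinAt
  exact (tendsto_atTop_or_atBot_of_tendsto_comp_pos hVd.continuous hVpos hVneg hV'c hV'pos
    hV'neg (by rwa [hV0]) hφc hy hg hy0 hVφ).imp_right Or.inl

theorem stmt_2_general (t₀ γ : ℝ) (hγ0 : 0 < γ) (hγ2 : γ ≤ 2)
    (V : ℝ → ℝ) (hV : ContDiff ℝ 2 V)
    (φ y ρ H : ℝ → ℝ)
    (hφ : ∀ t ∈ Set.Ici t₀, HasDerivWithinAt φ (y t) (Set.Ici t₀) t)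
    (hy : ∀ t ∈ Set.Ici t₀,
      HasDerivWithinAt y (-3 * H t * y t - deriv V (φ t)) (Set.Ici t₀) t)
    (hH : ∀ t ∈ Set.Ici t₀,
      HasDerivWithinAt H (-(1 / 2) * y t ^ 2 - γ / 2 * ρ t) (Set.Ici t₀) t)
    (hρ0 : ∀ t ∈ Set.Ici t₀, 0 ≤ ρ t)
    (hcon : ∀ t ∈ Set.Ici t₀, 3 * H t ^ 2 = ρ t + 1 / 2 * y t ^ 2 + V (φ t))
    (hVnn : ∀ s : ℝ, 0 ≤ V s)
    (hVzero : ∀ s : ℝ, V s = 0 ↔ s = 0)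
    (hV'bdd : ∀ A : Set ℝ, Bornology.IsBounded (V '' A) →
      Bornology.IsBounded (deriv V '' A))
    (hV'pos : ∀ s : ℝ, 0 < s → 0 < deriv V s)
    (hV'neg : ∀ s : ℝ, s < 0 → deriv V s < 0)
    (hH0 : 0 < H t₀) :
    (Tendsto φ atTop atTop ∧ ¬ Tendsto φ atTop atBot ∧ ¬ Tendsto φ atTop (nhds 0)) ∨
    (Tendsto φ atTop atBot ∧ ¬ Tendsto φ atTop atTop ∧ ¬ Tendsto φ atTop (nhds 0)) ∨
    (Tendsto φ atTop (nhds 0) ∧ ¬ Tendsto φ atTop atTop ∧ ¬ Tendsto φ atTop atBot) := by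
  apply exclusive_of_tendsto_atTop_or_atBot_or_nhds
  have hVd : Differentiable ℝ V := hV.differentiable (by norm_num)
  have hVpos : StrictMonoOn V (Ici 0) := strictMonoOn_of_deriv_pos (convex_Ici 0)
    hVd.continuous.continuousOn (by simpa using hV'pos)
  have hVneg : StrictAntiOn V (Iic 0) := strictAntiOn_of_deriv_neg (convex_Iic 0)
    hVd.continuous.continuousOn (by simpa using hV'neg)
  by_cases hHpos : ∀ t ∈ Ici t₀, 0 < H t
  · exact tendsto_of_hubble_pos hγ0 hVd (hV.continuous_deriv (by norm_num)) hφ hy hH hρ0 hcon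
      hVnn ((hVzero 0).2 rfl) hV'bdd hVpos hVneg hV'pos hV'neg hHpos
  push Not at hHpos
  obtain ⟨t₂, ht₂, hH₂⟩ := hHpos
  obtain ⟨t₁, ht₁, hH₁⟩ := intermediate_value_Icc' ht₂
    (fun t ht => (hH t ht.1).continuousWithinAt.mono Icc_subset_Ici_self) ⟨hH₂, hH0.le⟩
  have hφ0 : ∀ t ∈ Ici t₁, φ t = 0 := fun t ht => by
    have hHt := hubble_eq_zero_of_eq_zero hγ0 hγ2 hH hρ0 hcon hVnn ht₁.1 hH₁ t ht
    have := hcon t (ht₁.1.trans ht)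
    exact (hVzero _).1 (by nlinarith [hρ0 t (ht₁.1.trans ht), hVnn (φ t), sq_nonneg (y t)])
  exact Or.inr (Or.inr (tendsto_const_nhds.congr'
    (eventually_atTop.2 ⟨t₁, fun t ht => (hφ0 t ht).symm⟩)))

/-- Proposition 3: under the hypotheses of Proposition 2 and assuming in addition that
`V' > 0` on `(0, ∞)` and `V' < 0` on `(-∞, 0)`, the scalar field `φ` tends, as `t → ∞`,
to exactly one of `+∞`, `-∞` or `0` (the three alternatives are mutually exclusive). -/
theorem stmt_2 (t₀ γ : ℝ) (hγ0 : 0 < γ) (hγ2 : γ ≤ 2)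
    (V : ℝ → ℝ) (hV : ContDiff ℝ 2 V)
    (φ y ρ H : ℝ → ℝ)
    (hφ : ∀ t ∈ Set.Ici t₀, HasDerivWithinAt φ (y t) (Set.Ici t₀) t)
    (hy : ∀ t ∈ Set.Ici t₀,
      HasDerivWithinAt y (-3 * H t * y t - deriv V (φ t)) (Set.Ici t₀) t)
    (hρ : ∀ t ∈ Set.Ici t₀, HasDerivWithinAt ρ (-3 * γ * ρ t * H t) (Set.Ici t₀) t)
    (hH : ∀ t ∈ Set.Ici t₀,
      HasDerivWithinAt H (-(1 / 2) * y t ^ 2 - γ / 2 * ρ t) (Set.Ici t₀) t)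
    (hρ0 : ∀ t ∈ Set.Ici t₀, 0 ≤ ρ t)
    (hcon : ∀ t ∈ Set.Ici t₀, 3 * H t ^ 2 = ρ t + 1 / 2 * y t ^ 2 + V (φ t))
    (hVnn : ∀ s : ℝ, 0 ≤ V s)
    (hVzero : ∀ s : ℝ, V s = 0 ↔ s = 0)
    (hV'bdd : ∀ A : Set ℝ, Bornology.IsBounded (V '' A) →
      Bornology.IsBounded (deriv V '' A))
    (hV'pos : ∀ s : ℝ, 0 < s → 0 < deriv V s)
    (hV'neg : ∀ s : ℝ, s < 0 → deriv V s < 0)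
    (hH0 : 0 < H t₀) :
    (Tendsto φ atTop atTop ∧ ¬ Tendsto φ atTop atBot ∧ ¬ Tendsto φ atTop (nhds 0)) ∨
    (Tendsto φ atTop atBot ∧ ¬ Tendsto φ atTop atTop ∧ ¬ Tendsto φ atTop (nhds 0)) ∨
    (Tendsto φ atTop (nhds 0) ∧ ¬ Tendsto φ atTop atTop ∧ ¬ Tendsto φ atTop atBot) :=
  stmt_2_general t₀ γ hγ0 hγ2 V hV φ y ρ H hφ hy hH hρ0 hcon hVnn hVzero hV'bdd hV'pos hV'neg hH0
end

section
/- Suppose φ, y, ρ, H solve the flat scalar-field system on [t₀, ∞) with the Friedmann constraint 3H² = ρ + (1/2)y² + V(φ), H(t₀) > 0, and the potential satisfies: V(φ) ≥ 0 for all φ; V(φ) = 0 if and only if φ = 0; V' is bounded on every subset A ⊆ ℝ on which V is bounded; V'(φ) > 0 for φ > 0; V'(φ) < 0 for φ < 0. Assume moreover that V tends to a limit L₊ ∈ (0, +∞] as φ → +∞ and to a limit L₋ ∈ (0, +∞] as φ → -∞ (these limits exist by monotonicity of V on each half-line), and that 3·H(t₀)² < min{L₊, L₋}. Then φ(t) →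 0 and H(t) → 0 as t → ∞. -/
/-!
`H` is nonincreasing, and it stays positive because the constraint and `γ ≤ 2` give
`H' ≥ -3 H²`; hence `H → L` for some `L ≥ 0`. The constraint also bounds `V(φ)` by `3 H(t₀)²`,
which lies below both limits of `V`, so `φ` stays in a compact interval and every quantity of
the system, in particular `H''`, is bounded. By Barbalat's lemma `H' = -(y²/2 + γρ/2) → 0`, so
`y, ρ → 0` and `V(φ) → 3 L²`. If `L ≠ 0`, then `φ` eventually stays where `|V'|` is bounded
below, so `y' = -3 H y - V'(φ)` stays away from `0`, which the mean value theorem forbids since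
`y` converges. Hence `L = 0`, `V(φ) → 0`, and compactness forces `φ → 0`.
-/

open Filter Set Topology

theorem hasDerivAt_of_hasDerivWithinAt_Ici {f f' : ℝ → ℝ} {a : ℝ}
    (hf : ∀ t ∈ Ici a, HasDerivWithinAt f (f' t) (Ici a) t) {t : ℝ} (ht : a < t) :
    HasDerivAt f (f' t) t :=
  (hf t ht.le).hasDerivAt (Ici_mem_nhds ht)

theorem eventually_exists_abs_deriv_lt_of_tendsto {f f' : ℝ → ℝ} {a l δ ε : ℝ}
    (hf : ∀ t ∈ Ici a, HasDerivWithinAt f (f' t) (Ici a) t)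
    (hl : Tendsto f atTop (𝓝 l)) (hδ : 0 < δ) (hε : 0 < ε) :
    ∀ᶠ t in atTop, ∃ c ∈ Ioo t (t + δ), |f' c| < ε := by
  have hshift : Tendsto (fun t => f (t + δ) - f t) atTop (𝓝 0) := by
    simpa using (hl.comp (tendsto_atTop_add_const_right _ δ tendsto_id)).sub hl
  filter_upwards [hshift.eventually (eventually_abs_sub_lt 0 (mul_pos hε hδ)),
    eventually_ge_atTop a] with t hsmall hat
  obtain ⟨c, hc, hslope⟩ := exists_hasDerivAt_eq_slope f f' (lt_add_of_pos_right t hδ)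
    (fun s hs => (hf s (hat.trans hs.1)).continuousWithinAt.mono fun r hr => hat.trans hr.1)
    (fun s hs => hasDerivAt_of_hasDerivWithinAt_Ici hf (hat.trans_lt hs.1))
  refine ⟨c, hc, ?_⟩
  rw [hslope, add_sub_cancel_left, abs_div, abs_of_pos hδ, div_lt_iff₀ hδ]
  simpa using hsmall

/-- Barbalat's lemma. -/
theorem tendsto_deriv_zero_of_tendsto {f f' f'' : ℝ → ℝ} {a l K : ℝ}
    (hf : ∀ t ∈ Ici a, HasDerivWithinAt f (f' t) (Ici a) t)
    (hf' : ∀ t ∈ Ici a, HasDerivWithinAt f' (f'' t) (Ici a) t)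
    (hK : ∀ t ∈ Ici a, |f'' t| ≤ K) (hl : Tendsto f atTop (𝓝 l)) :
    Tendsto f' atTop (𝓝 0) := by
  have hK0 : 0 ≤ K := (abs_nonneg _).trans (hK a self_mem_Ici)
  rw [Metric.tendsto_nhds]
  intro ε hε
  set δ := ε / (2 * (K + 1))
  have hδ : 0 < δ := by positivity
  have hKδ : K * δ ≤ ε / 2 := by
    calc K * δ ≤ (K + 1) * δ := by gcongr; linarith
      _ = ε / 2 := by simp only [δ]; field_simp
  filter_upwards [eventually_exists_abs_deriv_lt_of_tendsto hf hl hδ (half_pos hε),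
    eventually_ge_atTop a] with t ⟨c, hc, hfc⟩ hat
  have hlip : |f' c - f' t| ≤ K * |c - t| :=
    (convex_Ici a).norm_image_sub_le_of_norm_hasDerivWithin_le hf' hK hat
      (hat.trans hc.1.le)
  have hct : |c - t| ≤ δ := by
    rw [abs_of_pos (sub_pos.2 hc.1)]; linarith [hc.2]
  rw [Real.dist_eq, sub_zero]
  calc |f' t| ≤ |f' c| + |f' c - f' t| := by simpa using abs_sub (f' c) (f' c - f' t)
    _ < ε / 2 + K * δ :=
        add_lt_add_of_lt_of_le hfc (hlip.trans (mul_le_mul_of_nonneg_left hct hK0))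
    _ ≤ ε := by linarith

theorem pos_of_hasDerivWithinAt_ge_neg_mul {f f' : ℝ → ℝ} {a K : ℝ}
    (hf : ∀ t ∈ Ici a, HasDerivWithinAt f (f' t) (Ici a) t) (ha : 0 < f a)
    (hK : ∀ t ∈ Ici a, 0 < f t → -(K * f t) ≤ f' t) : ∀ t ∈ Ici a, 0 < f t := by
  by_contra! hneg
  obtain ⟨u, hu, hfu⟩ := hneg
  have hcont : ContinuousOn f (Ici a) := fun t ht => (hf t ht).continuousWithinAt
  set S := Icc a u ∩ f ⁻¹' Iic 0
  have hS : IsClosed S :=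
    (hcont.mono Icc_subset_Ici_self).preimage_isClosed_of_isClosed isClosed_Icc isClosed_Iic
  have hSbdd : BddBelow S := ⟨a, fun s hs => hs.1.1⟩
  set t₁ := sInf S
  obtain ⟨⟨hat₁, _⟩, hft₁ : f t₁ ≤ 0⟩ : t₁ ∈ S := hS.csInf_mem ⟨u, ⟨hu, le_rfl⟩, hfu⟩ hSbdd
  have hpos : ∀ s ∈ Ico a t₁, 0 < f s := fun s hs => by
    by_contra! hfs
    have hsu : s ≤ u := hs.2.le.trans (csInf_le hSbdd ⟨⟨hu, le_rfl⟩, hfu⟩)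
    exact hs.2.not_ge (csInf_le hSbdd ⟨⟨hs.1, hsu⟩, hfs⟩)
  have hat₁' : a < t₁ := hat₁.lt_of_ne fun h => by rw [← h] at hft₁; linarith
  -- `f · exp (K (t - a))` is nondecreasing while `f` stays positive.
  set g := fun t => f t * Real.exp (K * (t - a))
  have hg : ∀ t, HasDerivAt (fun t => Real.exp (K * (t - a))) (Real.exp (K * (t - a)) * K) t :=
    fun t => by simpa using ((hasDerivAt_id t).sub_const a).const_mul K |>.exp
  obtain ⟨c, hc, hslope⟩ := exists_hasDerivAt_eq_slope g
    (fun t => f' t * Real.exp (K * (t - a)) + f t * (Real.exp (K * (t - a)) * K)) hat₁'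
    (fun s hs =>
      ((hcont s hs.1).mono Icc_subset_Ici_self).mul (hg s).continuousAt.continuousWithinAt)
    (fun s hs => (hasDerivAt_of_hasDerivWithinAt_Ici hf hs.1).mul (hg s))
  have hderiv : 0 ≤ f' c * Real.exp (K * (c - a)) + f c * (Real.exp (K * (c - a)) * K) := by
    have := hK c hc.1.le (hpos c ⟨hc.1.le, hc.2⟩)
    have := Real.exp_pos (K * (c - a))
    nlinarith
  rw [hslope, le_div_iff₀ (sub_pos.2 hat₁'), zero_mul, sub_nonneg] at hderiv
  have hgt₁ : g t₁ ≤ 0 := mul_nonpos_of_nonpos_of_nonneg hft₁ (Real.exp_pos _).le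
  have hga : g a = f a := by simp [g]
  linarith

theorem AntitoneOn.exists_tendsto_atTop_s3 {f : ℝ → ℝ} {a b : ℝ} (hf : AntitoneOn f (Ici a))
    (hb : ∀ t ∈ Ici a, b ≤ f t) : ∃ L, Tendsto f atTop (𝓝 L) := by
  have hanti : Antitone fun t => f (max t a) := fun s t hst =>
    hf (le_max_right s a) (le_max_right t a) (max_le_max_right a hst)
  refine ⟨_, (tendsto_atTop_ciInf hanti ⟨b, ?_⟩).congr' ?_⟩
  · rintro _ ⟨t, rfl⟩
    exact hb _ (le_max_right t a)
  · filter_upwards [eventually_ge_atTop a] with t ht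
    rw [max_eq_left ht]

theorem exists_setOf_le_subset_Icc {V : ℝ → ℝ} {c : ℝ} {Ltop Lbot : EReal}
    (htop : Tendsto (fun s => (V s : EReal)) atTop (𝓝 Ltop))
    (hbot : Tendsto (fun s => (V s : EReal)) atBot (𝓝 Lbot)) (hc : (c : EReal) < min Ltop Lbot) :
    ∃ m M, {s | V s ≤ c} ⊆ Icc m M := by
  obtain ⟨M, hM⟩ := eventually_atTop.1 (htop.eventually (eventually_gt_nhds (lt_min_iff.1 hc).1))
  obtain ⟨m, hm⟩ := eventually_atBot.1 (hbot.eventually (eventually_gt_nhds (lt_min_iff.1 hc).2))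
  refine ⟨m, M, fun s (hs : V s ≤ c) => ⟨le_of_not_ge fun hsm => ?_, le_of_not_ge fun hsM => ?_⟩⟩
  · exact (EReal.coe_lt_coe_iff.1 (hm s hsm)).not_ge hs
  · exact (EReal.coe_lt_coe_iff.1 (hM s hsM)).not_ge hs

theorem tendsto_of_tendsto_comp_of_isCompact {X ι : Type*} [TopologicalSpace X] {l : Filter ι}
    {K : Set X} (hK : IsCompact K) {W : X → ℝ} (hW : ContinuousOn W K) {x₀ : X}
    (hW₀ : ∀ x ∈ K, x ≠ x₀ → 0 < W x) {u : ι → X} (huK : ∀ᶠ i in l, u i ∈ K)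
    (hWu : Tendsto (fun i => W (u i)) l (𝓝 0)) : Tendsto u l (𝓝 x₀) := by
  rw [tendsto_nhds]
  intro U hU hx₀
  obtain ⟨η, hη, hWη⟩ := (hK.diff hU).exists_forall_le' (hW.mono sdiff_subset)
    fun x hx => hW₀ x hx.1 fun h => hx.2 (h ▸ hx₀)
  filter_upwards [huK, hWu.eventually (eventually_lt_nhds hη)] with i hiK hiW
  by_contra hiU
  exact (hWη (u i) ⟨hiK, hiU⟩).not_gt hiW

structure ScalarFieldFlow (t₀ γ : ℝ) (V φ y ρ H : ℝ → ℝ) : Prop where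
  hasDerivWithinAt_y :
    ∀ t ∈ Ici t₀, HasDerivWithinAt y (-3 * H t * y t - deriv V (φ t)) (Ici t₀) t
  hasDerivWithinAt_ρ : ∀ t ∈ Ici t₀, HasDerivWithinAt ρ (-3 * γ * ρ t * H t) (Ici t₀) t
  hasDerivWithinAt_H :
    ∀ t ∈ Ici t₀, HasDerivWithinAt H (-(1 / 2) * y t ^ 2 - γ / 2 * ρ t) (Ici t₀) t
  ρ_nonneg : ∀ t ∈ Ici t₀, 0 ≤ ρ t
  friedmann : ∀ t ∈ Ici t₀, 3 * H t ^ 2 = ρ t + 1 / 2 * y t ^ 2 + V (φ t)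

namespace ScalarFieldFlow

variable {t₀ γ : ℝ} {V φ y ρ H : ℝ → ℝ}

theorem antitoneOn_H (hs : ScalarFieldFlow t₀ γ V φ y ρ H) (hγ : 0 ≤ γ) :
    AntitoneOn H (Ici t₀) := by
  refine antitoneOn_of_hasDerivWithinAt_nonpos (convex_Ici t₀)
    (f' := fun t => -(1 / 2) * y t ^ 2 - γ / 2 * ρ t)
    (fun t ht => (hs.hasDerivWithinAt_H t ht).continuousWithinAt) (fun t ht => ?_) fun t ht => ?_
  all_goals rw [interior_Ici] at *
  · exact (hasDerivAt_of_hasDerivWithinAt_Ici hs.hasDerivWithinAt_H ht).hasDerivWithinAt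
  · have := hs.ρ_nonneg t (Ioi_subset_Ici_self ht)
    nlinarith [sq_nonneg (y t)]

theorem H_pos (hs : ScalarFieldFlow t₀ γ V φ y ρ H) (hγ0 : 0 ≤ γ) (hγ2 : γ ≤ 2)
    (hV : ∀ s, 0 ≤ V s) (hH₀ : 0 < H t₀) : ∀ t ∈ Ici t₀, 0 < H t := by
  -- While `0 < H ≤ H t₀`, the constraint and `γ ≤ 2` give `H' ≥ -3 H² ≥ -3 H(t₀) H`.
  refine pos_of_hasDerivWithinAt_ge_neg_mul hs.hasDerivWithinAt_H hH₀ (K := 3 * H t₀)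
    fun t ht hHt => ?_
  have := hs.antitoneOn_H hγ0 self_mem_Ici ht ht
  have := hs.friedmann t ht
  have := hs.ρ_nonneg t ht
  have := hV (φ t)
  nlinarith [sq_nonneg (y t)]

theorem energy_le (hs : ScalarFieldFlow t₀ γ V φ y ρ H) (hγ : 0 ≤ γ)
    (hpos : ∀ t ∈ Ici t₀, 0 < H t) {t : ℝ} (ht : t ∈ Ici t₀) :
    ρ t + 1 / 2 * y t ^ 2 + V (φ t) ≤ 3 * H t₀ ^ 2 := by
  rw [← hs.friedmann t ht]
  nlinarith [hs.antitoneOn_H hγ self_mem_Ici ht ht, hpos t ht]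

theorem tendsto_y_and_ρ (hs : ScalarFieldFlow t₀ γ V φ y ρ H) (hγ0 : 0 < γ) (hγ2 : γ ≤ 2)
    (hV : ∀ s, 0 ≤ V s) (hV' : Continuous (deriv V)) (hpos : ∀ t ∈ Ici t₀, 0 < H t)
    {K : Set ℝ} (hK : IsCompact K) (hφK : ∀ t ∈ Ici t₀, φ t ∈ K) {L : ℝ}
    (hL : Tendsto H atTop (𝓝 L)) :
    Tendsto y atTop (𝓝 0) ∧ Tendsto ρ atTop (𝓝 0) := by
  obtain ⟨C, hC⟩ := hK.exists_bound_of_continuousOn hV'.continuousOn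
  set H'' := fun t => 3 * H t * y t ^ 2 + y t * deriv V (φ t) + 3 * γ ^ 2 / 2 * ρ t * H t
  have hH' : ∀ t ∈ Ici t₀,
      HasDerivWithinAt (fun t => -(1 / 2) * y t ^ 2 - γ / 2 * ρ t) (H'' t) (Ici t₀) t := by
    intro t ht
    refine ((((hs.hasDerivWithinAt_y t ht).pow 2).const_mul (-(1 / 2))).sub
      ((hs.hasDerivWithinAt_ρ t ht).const_mul (γ / 2))).congr_deriv ?_
    simp only [H'']
    ring
  have hH''bound : ∀ t ∈ Ici t₀, |H'' t| ≤ 36 * H t₀ ^ 3 + 3 * H t₀ * C := by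
    intro t ht
    have hE := hs.energy_le hγ0.le hpos ht
    have hHt := hs.antitoneOn_H hγ0.le self_mem_Ici ht ht
    have hρt := hs.ρ_nonneg t ht
    have hVt := hV (φ t)
    have hHt0 := hpos t ht
    have hy : |y t| ≤ 3 * H t₀ := abs_le.2 ⟨by nlinarith, by nlinarith⟩
    have hyV : |y t * deriv V (φ t)| ≤ 3 * H t₀ * C := by
      rw [abs_mul]
      exact mul_le_mul hy (by simpa using hC _ (hφK t ht)) (abs_nonneg _) (by linarith)
    have h1 : 3 * H t * y t ^ 2 ≤ 18 * H t₀ ^ 3 := by nlinarith [sq_nonneg (y t)]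
    have h2 : 3 * γ ^ 2 / 2 * ρ t * H t ≤ 18 * H t₀ ^ 3 := by
      have hγsq : γ ^ 2 ≤ 4 := by nlinarith
      have hρH : ρ t * H t ≤ 3 * H t₀ ^ 2 * H t₀ :=
        mul_le_mul (by nlinarith [sq_nonneg (y t)]) hHt hHt0.le (by positivity)
      nlinarith [mul_le_mul hγsq hρH (by positivity) (by norm_num)]
    have : 0 ≤ 3 * H t * y t ^ 2 := by positivity
    have : 0 ≤ 3 * γ ^ 2 / 2 * ρ t * H t := by positivity
    simp only [H'']
    rw [abs_le] at hyV ⊢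
    constructor <;> linarith
  have hH'0 := tendsto_deriv_zero_of_tendsto hs.hasDerivWithinAt_H hH' hH''bound hL
  have hy2 : Tendsto (fun t => y t ^ 2) atTop (𝓝 0) := by
    refine squeeze_zero' (.of_forall fun t => sq_nonneg (y t)) ?_
      (by simpa using hH'0.const_mul (-2))
    filter_upwards [eventually_ge_atTop t₀] with t ht
    nlinarith [hs.ρ_nonneg t ht]
  refine ⟨?_, squeeze_zero' ?_ ?_ (by simpa using hH'0.const_mul (-(2 / γ)))⟩
  · rw [tendsto_zero_iff_abs_tendsto_zero]
    simpa [Function.comp_def, Real.sqrt_sq_eq_abs] using hy2.sqrt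
  · filter_upwards [eventually_ge_atTop t₀] with t ht using hs.ρ_nonneg t ht
  · filter_upwards with t
    field_simp
    nlinarith [sq_nonneg (y t)]

theorem tendsto_V_φ (hs : ScalarFieldFlow t₀ γ V φ y ρ H) {L : ℝ} (hL : Tendsto H atTop (𝓝 L))
    (hy : Tendsto y atTop (𝓝 0)) (hρ : Tendsto ρ atTop (𝓝 0)) :
    Tendsto (fun t => V (φ t)) atTop (𝓝 (3 * L ^ 2)) := by
  have hlim := ((hL.pow 2).const_mul 3).sub (hρ.add ((hy.pow 2).const_mul (1 / 2)))
  simp only [ne_eq, OfNat.ofNat_ne_zero, not_false_eq_true, zero_pow, mul_zero, add_zero,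
    sub_zero] at hlim
  refine hlim.congr' ?_
  filter_upwards [eventually_ge_atTop t₀] with t ht
  rw [hs.friedmann t ht]
  ring

theorem eq_zero_of_tendsto_H (hs : ScalarFieldFlow t₀ γ V φ y ρ H) (hV : Continuous V)
    (hV' : Continuous (deriv V)) (hV0 : V 0 = 0) (hV'ne : ∀ s, s ≠ 0 → deriv V s ≠ 0)
    {K : Set ℝ} (hK : IsCompact K) (hφK : ∀ t ∈ Ici t₀, φ t ∈ K) {L : ℝ}
    (hL : Tendsto H atTop (𝓝 L)) (hy : Tendsto y atTop (𝓝 0))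
    (hVφ : Tendsto (fun t => V (φ t)) atTop (𝓝 (3 * L ^ 2))) : L = 0 := by
  by_contra hL0
  have hc : 0 < 3 * L ^ 2 := by positivity
  have hVsub : IsClosed {s | 3 * L ^ 2 / 2 ≤ V s} := isClosed_le continuous_const hV
  obtain ⟨d, hd, hdV'⟩ := (hK.inter_right hVsub).exists_forall_le' hV'.abs.continuousOn
    fun s ⟨_, (hVs : 3 * L ^ 2 / 2 ≤ V s)⟩ => abs_pos.2 <| hV'ne s fun h0 => by
      rw [h0, hV0] at hVs; linarith
  have hHy : Tendsto (fun t => -3 * H t * y t) atTop (𝓝 0) := by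
    simpa using (hL.const_mul (-3)).mul hy
  have hfar : ∀ᶠ t in atTop, d / 2 < |-3 * H t * y t - deriv V (φ t)| := by
    filter_upwards [hHy.eventually (eventually_abs_sub_lt 0 (half_pos hd)),
      hVφ.eventually (eventually_gt_nhds (half_lt_self hc)), eventually_ge_atTop t₀]
      with t hHyt hVt ht
    have := hdV' (φ t) ⟨hφK t ht, hVt.le⟩
    have := abs_sub_abs_le_abs_sub (deriv V (φ t)) (-3 * H t * y t)
    rw [sub_zero] at hHyt
    rw [abs_sub_comm]
    linarith
  obtain ⟨T, hT⟩ := eventually_atTop.1 hfar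
  obtain ⟨t, ⟨c, hc, hyc⟩, htT⟩ := ((eventually_exists_abs_deriv_lt_of_tendsto
    hs.hasDerivWithinAt_y hy one_pos (half_pos hd)).and (eventually_ge_atTop T)).exists
  exact (hT c (htT.trans hc.1.le)).not_gt hyc

end ScalarFieldFlow

theorem stmt_3_general (t₀ γ : ℝ) (hγ0 : 0 < γ) (hγ2 : γ ≤ 2)
    (V : ℝ → ℝ) (hV : ContDiff ℝ 2 V)
    (φ y ρ H : ℝ → ℝ)
    (hy : ∀ t ∈ Set.Ici t₀,
      HasDerivWithinAt y (-3 * H t * y t - deriv V (φ t)) (Set.Ici t₀) t)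
    (hρ : ∀ t ∈ Set.Ici t₀, HasDerivWithinAt ρ (-3 * γ * ρ t * H t) (Set.Ici t₀) t)
    (hH : ∀ t ∈ Set.Ici t₀,
      HasDerivWithinAt H (-(1 / 2) * y t ^ 2 - γ / 2 * ρ t) (Set.Ici t₀) t)
    (hρ0 : ∀ t ∈ Set.Ici t₀, 0 ≤ ρ t)
    (hcon : ∀ t ∈ Set.Ici t₀, 3 * H t ^ 2 = ρ t + 1 / 2 * y t ^ 2 + V (φ t))
    (hVnn : ∀ s : ℝ, 0 ≤ V s)
    (hVzero : ∀ s : ℝ, V s = 0 ↔ s = 0)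
    (hV'pos : ∀ s : ℝ, 0 < s → 0 < deriv V s)
    (hV'neg : ∀ s : ℝ, s < 0 → deriv V s < 0)
    (hH0 : 0 < H t₀)
    (Lplus Lminus : EReal)
    (hLp : Tendsto (fun s : ℝ => (V s : EReal)) atTop (nhds Lplus))
    (hLm : Tendsto (fun s : ℝ => (V s : EReal)) atBot (nhds Lminus))
    (hinit : ((3 * H t₀ ^ 2 : ℝ) : EReal) < min Lplus Lminus) :
    Tendsto φ atTop (nhds 0) ∧ Tendsto H atTop (nhds 0) := by
  have hs : ScalarFieldFlow t₀ γ V φ y ρ H := ⟨hy, hρ, hH, hρ0, hcon⟩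
  have hV' : Continuous (deriv V) := hV.continuous_deriv one_le_two
  have hpos := hs.H_pos hγ0.le hγ2 hVnn hH0
  obtain ⟨m, M, hmM⟩ := exists_setOf_le_subset_Icc hLp hLm hinit
  have hφ : ∀ t ∈ Ici t₀, φ t ∈ Icc m M := fun t ht =>
    hmM (show V (φ t) ≤ 3 * H t₀ ^ 2 by
      linarith [hs.energy_le hγ0.le hpos ht, hρ0 t ht, sq_nonneg (y t)])
  obtain ⟨L, hL⟩ := (hs.antitoneOn_H hγ0.le).exists_tendsto_atTop_s3 fun t ht => (hpos t ht).le
  obtain ⟨hylim, hρlim⟩ := hs.tendsto_y_and_ρ hγ0 hγ2 hVnn hV' hpos isCompact_Icc hφ hL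
  have hVφ := hs.tendsto_V_φ hL hylim hρlim
  obtain rfl : L = 0 := hs.eq_zero_of_tendsto_H hV.continuous hV' ((hVzero 0).2 rfl)
    (fun s hs0 => hs0.lt_or_gt.elim (fun h => (hV'neg s h).ne) fun h => (hV'pos s h).ne')
    isCompact_Icc hφ hL hylim hVφ
  refine ⟨tendsto_of_tendsto_comp_of_isCompact isCompact_Icc hV.continuous.continuousOn
    (fun s _ hs0 => (hVnn s).lt_of_ne fun h => hs0 ((hVzero s).1 h.symm))
    (eventually_atTop.2 ⟨t₀, hφ⟩) (by simpa using hVφ), hL⟩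

/-- If, in addition to the hypotheses of Proposition 3, the potential tends to limits
`L₊, L₋ ∈ (0, +∞]` as `φ → ±∞` and the initial expansion satisfies
`3 H(t₀)² < min{L₊, L₋}`, then `φ(t) → 0` and `H(t) → 0` as `t → ∞`. -/
theorem stmt_3 (t₀ γ : ℝ) (hγ0 : 0 < γ) (hγ2 : γ ≤ 2)
    (V : ℝ → ℝ) (hV : ContDiff ℝ 2 V)
    (φ y ρ H : ℝ → ℝ)
    (hφ : ∀ t ∈ Set.Ici t₀, HasDerivWithinAt φ (y t) (Set.Ici t₀) t)
    (hy : ∀ t ∈ Set.Ici t₀,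
      HasDerivWithinAt y (-3 * H t * y t - deriv V (φ t)) (Set.Ici t₀) t)
    (hρ : ∀ t ∈ Set.Ici t₀, HasDerivWithinAt ρ (-3 * γ * ρ t * H t) (Set.Ici t₀) t)
    (hH : ∀ t ∈ Set.Ici t₀,
      HasDerivWithinAt H (-(1 / 2) * y t ^ 2 - γ / 2 * ρ t) (Set.Ici t₀) t)
    (hρ0 : ∀ t ∈ Set.Ici t₀, 0 ≤ ρ t)
    (hcon : ∀ t ∈ Set.Ici t₀, 3 * H t ^ 2 = ρ t + 1 / 2 * y t ^ 2 + V (φ t))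
    (hVnn : ∀ s : ℝ, 0 ≤ V s)
    (hVzero : ∀ s : ℝ, V s = 0 ↔ s = 0)
    (hV'bdd : ∀ A : Set ℝ, Bornology.IsBounded (V '' A) →
      Bornology.IsBounded (deriv V '' A))
    (hV'pos : ∀ s : ℝ, 0 < s → 0 < deriv V s)
    (hV'neg : ∀ s : ℝ, s < 0 → deriv V s < 0)
    (hH0 : 0 < H t₀)
    (Lplus Lminus : EReal)
    (hLp0 : 0 < Lplus) (hLm0 : 0 < Lminus)
    (hLp : Tendsto (fun s : ℝ => (V s : EReal)) atTop (nhds Lplus))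
    (hLm : Tendsto (fun s : ℝ => (V s : EReal)) atBot (nhds Lminus))
    (hinit : ((3 * H t₀ ^ 2 : ℝ) : EReal) < min Lplus Lminus) :
    Tendsto φ atTop (nhds 0) ∧ Tendsto H atTop (nhds 0) :=
  stmt_3_general t₀ γ hγ0 hγ2 V hV φ y ρ H hy hρ hH hρ0 hcon hVnn hVzero hV'pos hV'neg hH0 Lplus
    Lminus hLp hLm hinit
end

section
/- Suppose φ, y, ρ, H solve the flat scalar-field system on [t₀, ∞) with the Friedmann constraint 3H² = ρ + (1/2)y² + V(φ), ρ(t₀) > 0, H(t₀) > 0, and the potential satisfies: V(φ) ≥ 0 for all φ; V(φ) → +∞ as φ → -∞; V' is continuous with V'(φ) < 0 for all φ; and V' is bounded on every subset A ⊆ ℝ on which V is bounded. Then y(t) → 0, ρ(t) → 0, and φ(t) → +∞ as t → ∞. -/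
open Filter Set Topology Asymptotics

/-!
Since `V > 0`, the Friedmann constraint keeps `H` away from zero, and `H' = -(y²/2 + γρ/2) ≤ 0`,
so `H` decreases to a limit and `ρ + y²/2 + V(φ) = 3H²` stays bounded. Hence `y`, `ρ`, `V(φ)`
and (by the hypothesis on `V'`) `V'(φ)` are bounded, so the dissipation `y²/2 + γρ/2 = -H'` is
integrable and Lipschitz; by Barbalat's argument it tends to `0`, giving `y → 0` and `ρ → 0`.
Finally, `V(φ)` bounded forces `φ` to be bounded below. If `φ` returned below some level `M`
infinitely often, then, since `φ' = y` is small, `φ` would stay in a compact interval on which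
`V' ≤ -c < 0` for a unit of time, and `y' = -3Hy - V'(φ) ≥ c/2` there would contradict `y → 0`.
-/

theorem Convex.mul_sub_le_image_sub_of_le_hasDerivWithinAt {D : Set ℝ} (hD : Convex ℝ D)
    {f f' : ℝ → ℝ} (hf : ∀ x ∈ D, HasDerivWithinAt f (f' x) D x) {C : ℝ}
    (hC : ∀ x ∈ D, C ≤ f' x) {a b : ℝ} (ha : a ∈ D) (hb : b ∈ D) (hab : a ≤ b) :
    C * (b - a) ≤ f b - f a := by
  have hderiv : ∀ x ∈ interior D, HasDerivAt f (f' x) x := fun x hx =>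
    (hf x (interior_subset hx)).hasDerivAt (mem_interior_iff_mem_nhds.1 hx)
  refine hD.mul_sub_le_image_sub_of_le_deriv (fun x hx => (hf x hx).continuousWithinAt)
    (fun x hx => (hderiv x hx).differentiableAt.differentiableWithinAt)
    (fun x hx => (hderiv x hx).deriv ▸ hC x (interior_subset hx)) a ha b hb hab

theorem Convex.image_sub_le_mul_sub_of_hasDerivWithinAt_le {D : Set ℝ} (hD : Convex ℝ D)
    {f f' : ℝ → ℝ} (hf : ∀ x ∈ D, HasDerivWithinAt f (f' x) D x) {C : ℝ}
    (hC : ∀ x ∈ D, f' x ≤ C) {a b : ℝ} (ha : a ∈ D) (hb : b ∈ D) (hab : a ≤ b) :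
    f b - f a ≤ C * (b - a) := by
  have := hD.mul_sub_le_image_sub_of_le_hasDerivWithinAt (fun x hx => (hf x hx).neg)
    (fun x hx => neg_le_neg (hC x hx)) ha hb hab
  simp only [Pi.neg_apply] at this
  linarith

theorem Convex.antitoneOn_of_hasDerivWithinAt_nonpos {D : Set ℝ} (hD : Convex ℝ D)
    {f f' : ℝ → ℝ} (hf : ∀ x ∈ D, HasDerivWithinAt f (f' x) D x) (hf' : ∀ x ∈ D, f' x ≤ 0) :
    AntitoneOn f D := fun a ha b hb hab => by
  simpa using hD.image_sub_le_mul_sub_of_hasDerivWithinAt_le hf hf' ha hb hab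

theorem Convex.uniformContinuousOn_of_hasDerivWithinAt_isBigO_one {D : Set ℝ} (hD : Convex ℝ D)
    {f f' : ℝ → ℝ} (hf : ∀ x ∈ D, HasDerivWithinAt f (f' x) D x)
    (hf' : f' =O[𝓟 D] fun _ => (1 : ℝ)) : UniformContinuousOn f D := by
  obtain ⟨C, hC⟩ := isBigO_principal.1 hf'
  refine (hD.lipschitzOnWith_of_nnnorm_hasDerivWithin_le hf (C := C.toNNReal)
    fun x hx => ?_).uniformContinuousOn
  rw [← NNReal.coe_le_coe, coe_nnnorm, Real.coe_toNNReal']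
  simpa using (hC x hx).trans (le_max_left C 0 |>.trans_eq' (by simp))

theorem IsPreconnected.forall_pos_of_forall_ne_zero {s : Set ℝ} (hs : IsPreconnected s)
    {f : ℝ → ℝ} (hf : ContinuousOn f s) (hf0 : ∀ x ∈ s, f x ≠ 0) {a : ℝ} (ha : a ∈ s)
    (hfa : 0 < f a) : ∀ x ∈ s, 0 < f x := by
  intro x hx
  by_contra! hfx
  obtain ⟨z, hz, hfz⟩ := hs.intermediate_value hx ha hf ⟨hfx, hfa.le⟩
  exact hf0 z hz hfz

theorem exists_pos_forall_le_neg_of_neg {K : Set ℝ} (hK : IsCompact K) {g : ℝ → ℝ}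
    (hg : ContinuousOn g K) (hneg : ∀ s ∈ K, g s < 0) : ∃ c > 0, ∀ s ∈ K, g s ≤ -c := by
  rcases K.eq_empty_or_nonempty with rfl | hne
  · exact ⟨1, one_pos, by simp⟩
  obtain ⟨s₀, hs₀, hmax⟩ := hK.exists_isMaxOn hne hg
  exact ⟨-g s₀, neg_pos.2 (hneg s₀ hs₀), fun s hs => by simpa using hmax hs⟩

theorem AntitoneOn.exists_tendsto_of_bddBelow {t₀ : ℝ} {F : ℝ → ℝ} (hF : AntitoneOn F (Ici t₀))
    (hFbdd : BddBelow (F '' Ici t₀)) : ∃ L, Tendsto F atTop (𝓝 L) := by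
  have hG : Antitone fun t => F (max t t₀) := fun a b hab =>
    hF (le_max_right a t₀) (le_max_right b t₀) (max_le_max_right t₀ hab)
  have hGbdd : BddBelow (range fun t => F (max t t₀)) :=
    hFbdd.mono (range_subset_iff.2 fun t => mem_image_of_mem F (le_max_right t t₀))
  refine ⟨_, (tendsto_atTop_ciInf hG hGbdd).congr' ?_⟩
  filter_upwards [eventually_ge_atTop t₀] with t ht
  rw [max_eq_left ht]

theorem tendsto_zero_of_hasDerivWithinAt_neg_of_uniformContinuousOn {t₀ : ℝ} {F f : ℝ → ℝ}
    (hF : ∀ t ∈ Ici t₀, HasDerivWithinAt F (-f t) (Ici t₀) t) (hf0 : ∀ t ∈ Ici t₀, 0 ≤ f t)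
    (hFbdd : BddBelow (F '' Ici t₀)) (hf : UniformContinuousOn f (Ici t₀)) :
    Tendsto f atTop (𝓝 0) := by
  have hanti : AntitoneOn F (Ici t₀) :=
    (convex_Ici t₀).antitoneOn_of_hasDerivWithinAt_nonpos hF fun t ht => neg_nonpos.2 (hf0 t ht)
  obtain ⟨L, hL⟩ := hanti.exists_tendsto_of_bddBelow hFbdd
  refine tendsto_order.2 ⟨fun a ha => ?_, fun ε hε => ?_⟩
  · filter_upwards [eventually_ge_atTop t₀] with t ht
    exact ha.trans_le (hf0 t ht)
  obtain ⟨δ, hδ, hfδ⟩ := Metric.uniformContinuousOn_iff.1 hf (ε / 2) (half_pos hε)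
  have hdrop : Tendsto (fun t => F t - F (t + δ / 2)) atTop (𝓝 0) := by
    simpa using hL.sub (hL.comp (tendsto_atTop_add_const_right _ (δ / 2) tendsto_id))
  -- if `f t ≥ ε`, then `f ≥ ε / 2` on `[t, t + δ / 2]`, so `F` drops there by `εδ / 4`
  filter_upwards [eventually_ge_atTop t₀,
    hdrop.eventually_lt_const (by positivity : 0 < ε / 2 * (δ / 2))] with t ht hFt
  by_contra! hft
  have hsub : Icc t (t + δ / 2) ⊆ Ici t₀ := Icc_subset_Ici_self.trans (Ici_subset_Ici.2 ht)
  have hlarge : ∀ s ∈ Icc t (t + δ / 2), -f s ≤ -(ε / 2) := by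
    intro s hs
    have hclose := hfδ s (hsub hs) t ht (by
      rw [Real.dist_eq, abs_of_nonneg (by linarith [hs.1])]; linarith [hs.2])
    rw [Real.dist_eq] at hclose
    linarith [(abs_lt.1 hclose).1]
  have hfall := (convex_Icc t (t + δ / 2)).image_sub_le_mul_sub_of_hasDerivWithinAt_le
    (fun s hs => (hF s (hsub hs)).mono hsub) hlarge (left_mem_Icc.2 (by linarith))
    (right_mem_Icc.2 (by linarith)) (by linarith)
  linarith

theorem tendsto_atTop_of_damped_motion {t₀ m : ℝ} {x v g W : ℝ → ℝ}
    (hx : ∀ t ∈ Ici t₀, HasDerivWithinAt x (v t) (Ici t₀) t)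
    (hv : ∀ t ∈ Ici t₀, HasDerivWithinAt v (g t - W (x t)) (Ici t₀) t)
    (hv0 : Tendsto v atTop (𝓝 0)) (hg : Tendsto g atTop (𝓝 0)) (hW : Continuous W)
    (hWneg : ∀ s, W s < 0) (hm : ∀ t ∈ Ici t₀, m ≤ x t) : Tendsto x atTop atTop := by
  refine tendsto_atTop.2 fun M => ?_
  by_contra hM
  obtain ⟨c, hc, hWc⟩ := exists_pos_forall_le_neg_of_neg isCompact_Icc
    (hW.continuousOn (s := Icc m (M + 1))) fun s _ => hWneg s
  obtain ⟨T, hT⟩ := eventually_atTop.1 <| (eventually_ge_atTop t₀).and <|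
    ((by simpa using hv0.abs : Tendsto (|v ·|) atTop (𝓝 0)).eventually_lt_const
      (lt_min one_pos (by positivity : 0 < c / 4))).and
    ((by simpa using hg.abs : Tendsto (|g ·|) atTop (𝓝 0)).eventually_lt_const
      (half_pos hc))
  obtain ⟨t, htT, hxt⟩ := frequently_atTop.1 (not_eventually.1 hM) T
  have hsub : Icc t (t + 1) ⊆ Ici t₀ := Icc_subset_Ici_self.trans (Ici_subset_Ici.2 (hT t htT).1)
  have hslow : ∀ s ∈ Icc t (t + 1), |v s| < min 1 (c / 4) := fun s hs => (hT s (htT.trans hs.1)).2.1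
  -- on `[t, t + 1]` the position stays in `[m, M + 1]`, where the force `-W` is at least `c`
  have hxK : ∀ s ∈ Icc t (t + 1), x s ∈ Icc m (M + 1) := fun s hs => by
    have hdrift := (convex_Icc t (t + 1)).image_sub_le_mul_sub_of_hasDerivWithinAt_le
      (fun r hr => (hx r (hsub hr)).mono hsub)
      (fun r hr => ((le_abs_self _).trans_lt (hslow r hr)).le.trans (min_le_left _ _))
      (left_mem_Icc.2 (by linarith)) hs hs.1
    exact ⟨hm s (hsub hs), by linarith [hs.2]⟩
  have hgain := (convex_Icc t (t + 1)).mul_sub_le_image_sub_of_le_hasDerivWithinAt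
    (C := c / 2) (fun r hr => (hv r (hsub hr)).mono hsub)
    (fun r hr => by
      linarith [hWc _ (hxK r hr), neg_abs_le (g r), (hT r (htT.trans hr.1)).2.2])
    (left_mem_Icc.2 (by linarith)) (right_mem_Icc.2 (by linarith)) (by linarith)
  have hv_start := (hslow t (left_mem_Icc.2 (by linarith))).trans_le (min_le_right _ _)
  have hv_end := (hslow (t + 1) (right_mem_Icc.2 (by linarith))).trans_le (min_le_right _ _)
  linarith [le_abs_self (v (t + 1)), neg_abs_le (v t)]

structure IsFlatScalarFieldSolution (t₀ γ : ℝ) (V φ y ρ H : ℝ → ℝ) : Prop where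
  hasDerivWithinAt_φ : ∀ t ∈ Ici t₀, HasDerivWithinAt φ (y t) (Ici t₀) t
  hasDerivWithinAt_y :
    ∀ t ∈ Ici t₀, HasDerivWithinAt y (-3 * H t * y t - deriv V (φ t)) (Ici t₀) t
  hasDerivWithinAt_ρ : ∀ t ∈ Ici t₀, HasDerivWithinAt ρ (-3 * γ * ρ t * H t) (Ici t₀) t
  hasDerivWithinAt_H :
    ∀ t ∈ Ici t₀, HasDerivWithinAt H (-(1 / 2) * y t ^ 2 - γ / 2 * ρ t) (Ici t₀) t
  ρ_nonneg : ∀ t ∈ Ici t₀, 0 ≤ ρ t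
  friedmann : ∀ t ∈ Ici t₀, 3 * H t ^ 2 = ρ t + 1 / 2 * y t ^ 2 + V (φ t)

noncomputable def dissipation (γ : ℝ) (y ρ : ℝ → ℝ) (t : ℝ) : ℝ := 1 / 2 * y t ^ 2 + γ / 2 * ρ t

namespace IsFlatScalarFieldSolution

variable {t₀ γ : ℝ} {V φ y ρ H : ℝ → ℝ}

theorem dissipation_nonneg (hs : IsFlatScalarFieldSolution t₀ γ V φ y ρ H) (hγ : 0 ≤ γ) :
    ∀ t ∈ Ici t₀, 0 ≤ dissipation γ y ρ t := fun t ht => by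
  have := hs.ρ_nonneg t ht
  unfold dissipation
  positivity

theorem hasDerivWithinAt_H_neg_dissipation (hs : IsFlatScalarFieldSolution t₀ γ V φ y ρ H) :
    ∀ t ∈ Ici t₀, HasDerivWithinAt H (-dissipation γ y ρ t) (Ici t₀) t := fun t ht =>
  (hs.hasDerivWithinAt_H t ht).congr_deriv (by unfold dissipation; ring)

theorem antitoneOn_H (hs : IsFlatScalarFieldSolution t₀ γ V φ y ρ H) (hγ : 0 ≤ γ) :
    AntitoneOn H (Ici t₀) :=
  (convex_Ici t₀).antitoneOn_of_hasDerivWithinAt_nonpos hs.hasDerivWithinAt_H_neg_dissipation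
    fun t ht => neg_nonpos.2 (hs.dissipation_nonneg hγ t ht)

theorem H_pos (hs : IsFlatScalarFieldSolution t₀ γ V φ y ρ H) (hV : ∀ s, 0 < V s)
    (h0 : 0 < H t₀) : ∀ t ∈ Ici t₀, 0 < H t := by
  refine isPreconnected_Ici.forall_pos_of_forall_ne_zero
    (fun t ht => (hs.hasDerivWithinAt_H t ht).continuousWithinAt) (fun t ht hHt => ?_)
    self_mem_Ici h0
  have := hs.friedmann t ht
  nlinarith [hs.ρ_nonneg t ht, hV (φ t), sq_nonneg (y t)]

theorem energy_le (hs : IsFlatScalarFieldSolution t₀ γ V φ y ρ H) (hγ : 0 ≤ γ)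
    (hHpos : ∀ t ∈ Ici t₀, 0 < H t) :
    ∀ t ∈ Ici t₀, ρ t + 1 / 2 * y t ^ 2 + V (φ t) ≤ 3 * H t₀ ^ 2 := fun t ht => by
  have hle : H t ≤ H t₀ := hs.antitoneOn_H hγ self_mem_Ici ht ht
  rw [← hs.friedmann t ht]
  nlinarith [hHpos t ht]

theorem isBigO_H (hs : IsFlatScalarFieldSolution t₀ γ V φ y ρ H) (hγ : 0 ≤ γ)
    (hHpos : ∀ t ∈ Ici t₀, 0 < H t) : H =O[𝓟 (Ici t₀)] fun _ => (1 : ℝ) :=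
  isBigO_principal.2 ⟨H t₀, fun t ht => by
    simpa [abs_of_pos (hHpos t ht)] using hs.antitoneOn_H hγ self_mem_Ici ht ht⟩

theorem isBigO_y (hs : IsFlatScalarFieldSolution t₀ γ V φ y ρ H) (hγ : 0 ≤ γ)
    (hHpos : ∀ t ∈ Ici t₀, 0 < H t) (hV : ∀ s, 0 ≤ V s) : y =O[𝓟 (Ici t₀)] fun _ => (1 : ℝ) :=
  isBigO_principal.2 ⟨√(6 * H t₀ ^ 2), fun t ht => by
    simpa using Real.abs_le_sqrt (by
      nlinarith [hs.energy_le hγ hHpos t ht, hs.ρ_nonneg t ht, hV (φ t)] : y t ^ 2 ≤ 6 * H t₀ ^ 2)⟩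

theorem isBigO_ρ (hs : IsFlatScalarFieldSolution t₀ γ V φ y ρ H) (hγ : 0 ≤ γ)
    (hHpos : ∀ t ∈ Ici t₀, 0 < H t) (hV : ∀ s, 0 ≤ V s) : ρ =O[𝓟 (Ici t₀)] fun _ => (1 : ℝ) :=
  isBigO_principal.2 ⟨3 * H t₀ ^ 2, fun t ht => by
    simpa [abs_of_nonneg (hs.ρ_nonneg t ht)] using
      (by nlinarith [hs.energy_le hγ hHpos t ht, sq_nonneg (y t), hV (φ t)] :
        ρ t ≤ 3 * H t₀ ^ 2)⟩

theorem isBigO_deriv_V_comp_φ (hs : IsFlatScalarFieldSolution t₀ γ V φ y ρ H) (hγ : 0 ≤ γ)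
    (hHpos : ∀ t ∈ Ici t₀, 0 < H t) (hV : ∀ s, 0 ≤ V s)
    (hV' : ∀ A : Set ℝ, Bornology.IsBounded (V '' A) → Bornology.IsBounded (deriv V '' A)) :
    (fun t => deriv V (φ t)) =O[𝓟 (Ici t₀)] fun _ => (1 : ℝ) := by
  have hVφ : Bornology.IsBounded (V '' (φ '' Ici t₀)) := by
    refine (Metric.isBounded_Icc 0 (3 * H t₀ ^ 2)).subset ?_
    rintro _ ⟨_, ⟨t, ht, rfl⟩, rfl⟩
    exact ⟨hV _, by nlinarith [hs.energy_le hγ hHpos t ht, sq_nonneg (y t), hs.ρ_nonneg t ht]⟩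
  obtain ⟨C, hC⟩ := isBounded_iff_forall_norm_le.1 (hV' _ hVφ)
  exact isBigO_principal.2 ⟨C, fun t ht => by simpa using hC _ ⟨φ t, ⟨t, ht, rfl⟩, rfl⟩⟩

theorem hasDerivWithinAt_dissipation (hs : IsFlatScalarFieldSolution t₀ γ V φ y ρ H) :
    ∀ t ∈ Ici t₀, HasDerivWithinAt (dissipation γ y ρ)
      (y t * (-3 * H t * y t - deriv V (φ t)) + γ / 2 * (-3 * γ * ρ t * H t)) (Ici t₀) t :=
  fun t ht => ((((hs.hasDerivWithinAt_y t ht).pow 2).const_mul (1 / 2)).add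
    ((hs.hasDerivWithinAt_ρ t ht).const_mul (γ / 2))).congr_deriv (by ring)

theorem uniformContinuousOn_dissipation (hs : IsFlatScalarFieldSolution t₀ γ V φ y ρ H)
    (hy : y =O[𝓟 (Ici t₀)] fun _ => (1 : ℝ)) (hρ : ρ =O[𝓟 (Ici t₀)] fun _ => (1 : ℝ))
    (hH : H =O[𝓟 (Ici t₀)] fun _ => (1 : ℝ))
    (hV' : (fun t => deriv V (φ t)) =O[𝓟 (Ici t₀)] fun _ => (1 : ℝ)) :
    UniformContinuousOn (dissipation γ y ρ) (Ici t₀) := by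
  refine (convex_Ici t₀).uniformContinuousOn_of_hasDerivWithinAt_isBigO_one
    hs.hasDerivWithinAt_dissipation ?_
  have hfriction : (fun t => -3 * H t * y t) =O[𝓟 (Ici t₀)] fun _ => (1 : ℝ) := by
    simpa only [mul_one] using (hH.const_mul_left (-3)).mul hy
  have hkinetic : (fun t => y t * (-3 * H t * y t - deriv V (φ t))) =O[𝓟 (Ici t₀)]
      fun _ => (1 : ℝ) := by
    simpa only [mul_one] using hy.mul (hfriction.sub hV')
  have hfluid : (fun t => γ / 2 * (-3 * γ * ρ t * H t)) =O[𝓟 (Ici t₀)] fun _ => (1 : ℝ) := by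
    simpa only [mul_one] using ((hρ.const_mul_left (-3 * γ)).mul hH).const_mul_left (γ / 2)
  exact hkinetic.add hfluid

theorem tendsto_dissipation_zero (hs : IsFlatScalarFieldSolution t₀ γ V φ y ρ H) (hγ : 0 ≤ γ)
    (hHpos : ∀ t ∈ Ici t₀, 0 < H t) (hV : ∀ s, 0 ≤ V s)
    (hV' : ∀ A : Set ℝ, Bornology.IsBounded (V '' A) → Bornology.IsBounded (deriv V '' A)) :
    Tendsto (dissipation γ y ρ) atTop (𝓝 0) :=
  tendsto_zero_of_hasDerivWithinAt_neg_of_uniformContinuousOn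
    hs.hasDerivWithinAt_H_neg_dissipation (hs.dissipation_nonneg hγ)
    ⟨0, forall_mem_image.2 fun t ht => (hHpos t ht).le⟩
    (hs.uniformContinuousOn_dissipation (hs.isBigO_y hγ hHpos hV) (hs.isBigO_ρ hγ hHpos hV)
      (hs.isBigO_H hγ hHpos) (hs.isBigO_deriv_V_comp_φ hγ hHpos hV hV'))

theorem tendsto_y_zero (hs : IsFlatScalarFieldSolution t₀ γ V φ y ρ H) (hγ : 0 ≤ γ)
    (hdiss : Tendsto (dissipation γ y ρ) atTop (𝓝 0)) : Tendsto y atTop (𝓝 0) := by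
  refine squeeze_zero_norm' (a := fun t => √(2 * dissipation γ y ρ t)) ?_
    (by simpa using (hdiss.const_mul 2).sqrt)
  filter_upwards [eventually_ge_atTop t₀] with t ht
  refine Real.abs_le_sqrt ?_
  unfold dissipation
  nlinarith [hs.ρ_nonneg t ht]

theorem tendsto_ρ_zero (hs : IsFlatScalarFieldSolution t₀ γ V φ y ρ H) (hγ : 0 < γ)
    (hdiss : Tendsto (dissipation γ y ρ) atTop (𝓝 0)) : Tendsto ρ atTop (𝓝 0) := by
  refine squeeze_zero' (eventually_atTop.2 ⟨t₀, hs.ρ_nonneg⟩) ?_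
    (by simpa using hdiss.const_mul (2 / γ))
  filter_upwards [eventually_ge_atTop t₀] with t ht
  unfold dissipation
  have hcancel : 2 / γ * (γ / 2 * ρ t) = ρ t := by field_simp
  have hkinetic : 0 ≤ 2 / γ * (1 / 2 * y t ^ 2) := by positivity
  rw [mul_add, hcancel]
  linarith

theorem tendsto_friction_zero (hs : IsFlatScalarFieldSolution t₀ γ V φ y ρ H) (hγ : 0 ≤ γ)
    (hHpos : ∀ t ∈ Ici t₀, 0 < H t) (hy0 : Tendsto y atTop (𝓝 0)) :
    Tendsto (fun t => -3 * H t * y t) atTop (𝓝 0) := by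
  have hH := (hs.isBigO_H hγ hHpos).mono (le_principal_iff.2 (Ici_mem_atTop t₀))
  have hfriction : (fun t => -3 * H t * y t) =O[atTop] y := by
    simpa only [one_mul] using (hH.const_mul_left (-3)).mul (isBigO_refl y atTop)
  exact hfriction.trans_tendsto hy0

theorem exists_forall_le_φ (hs : IsFlatScalarFieldSolution t₀ γ V φ y ρ H) (hγ : 0 ≤ γ)
    (hHpos : ∀ t ∈ Ici t₀, 0 < H t) (hV : Tendsto V atBot atTop) :
    ∃ m, ∀ t ∈ Ici t₀, m ≤ φ t := by
  obtain ⟨m, hm⟩ := eventually_atBot.1 (hV.eventually_gt_atTop (3 * H t₀ ^ 2))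
  refine ⟨m, fun t ht => le_of_not_ge fun hφm => ?_⟩
  linarith [hm _ hφm, hs.energy_le hγ hHpos t ht, hs.ρ_nonneg t ht, sq_nonneg (y t)]

end IsFlatScalarFieldSolution

theorem stmt_4_general (t₀ γ : ℝ) (hγ0 : 0 < γ)
    (V : ℝ → ℝ)
    (φ y ρ H : ℝ → ℝ)
    (hφ : ∀ t ∈ Set.Ici t₀, HasDerivWithinAt φ (y t) (Set.Ici t₀) t)
    (hy : ∀ t ∈ Set.Ici t₀,
      HasDerivWithinAt y (-3 * H t * y t - deriv V (φ t)) (Set.Ici t₀) t)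
    (hρ : ∀ t ∈ Set.Ici t₀, HasDerivWithinAt ρ (-3 * γ * ρ t * H t) (Set.Ici t₀) t)
    (hH : ∀ t ∈ Set.Ici t₀,
      HasDerivWithinAt H (-(1 / 2) * y t ^ 2 - γ / 2 * ρ t) (Set.Ici t₀) t)
    (hρ0 : ∀ t ∈ Set.Ici t₀, 0 ≤ ρ t)
    (hcon : ∀ t ∈ Set.Ici t₀, 3 * H t ^ 2 = ρ t + 1 / 2 * y t ^ 2 + V (φ t))
    (hVnn : ∀ s : ℝ, 0 ≤ V s)
    (hVbot : Tendsto V atBot atTop)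
    (hV'cont : Continuous (deriv V))
    (hV'neg : ∀ s : ℝ, deriv V s < 0)
    (hV'bdd : ∀ A : Set ℝ, Bornology.IsBounded (V '' A) →
      Bornology.IsBounded (deriv V '' A))
    (hH0 : 0 < H t₀) :
    Tendsto y atTop (nhds 0) ∧ Tendsto ρ atTop (nhds 0) ∧ Tendsto φ atTop atTop := by
  have hs : IsFlatScalarFieldSolution t₀ γ V φ y ρ H := ⟨hφ, hy, hρ, hH, hρ0, hcon⟩
  have hVpos : ∀ s, 0 < V s := fun s =>
    (hVnn (s + 1)).trans_lt (strictAnti_of_deriv_neg hV'neg (lt_add_one s))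
  have hHpos := hs.H_pos hVpos hH0
  have hdiss := hs.tendsto_dissipation_zero hγ0.le hHpos hVnn hV'bdd
  have hy0 := hs.tendsto_y_zero hγ0.le hdiss
  obtain ⟨m, hm⟩ := hs.exists_forall_le_φ hγ0.le hHpos hVbot
  exact ⟨hy0, hs.tendsto_ρ_zero hγ0 hdiss, tendsto_atTop_of_damped_motion hφ hy hy0
    (hs.tendsto_friction_zero hγ0.le hHpos hy0) hV'cont hV'neg hm⟩

/-- Proposition 4: for the flat scalar-field system with `ρ(t₀) > 0`, `H(t₀) > 0` and a
non-negative potential with `V(φ) → +∞` as `φ → -∞`, `V'` continuous and everywhere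
negative, and `V'` bounded wherever `V` is bounded, one has `y → 0`, `ρ → 0` and
`φ → +∞` as `t → ∞`. -/
theorem stmt_4 (t₀ γ : ℝ) (hγ0 : 0 < γ) (hγ2 : γ ≤ 2)
    (V : ℝ → ℝ) (hV : ContDiff ℝ 2 V)
    (φ y ρ H : ℝ → ℝ)
    (hφ : ∀ t ∈ Set.Ici t₀, HasDerivWithinAt φ (y t) (Set.Ici t₀) t)
    (hy : ∀ t ∈ Set.Ici t₀,
      HasDerivWithinAt y (-3 * H t * y t - deriv V (φ t)) (Set.Ici t₀) t)
    (hρ : ∀ t ∈ Set.Ici t₀, HasDerivWithinAt ρ (-3 * γ * ρ t * H t) (Set.Ici t₀) t)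
    (hH : ∀ t ∈ Set.Ici t₀,
      HasDerivWithinAt H (-(1 / 2) * y t ^ 2 - γ / 2 * ρ t) (Set.Ici t₀) t)
    (hρ0 : ∀ t ∈ Set.Ici t₀, 0 ≤ ρ t)
    (hcon : ∀ t ∈ Set.Ici t₀, 3 * H t ^ 2 = ρ t + 1 / 2 * y t ^ 2 + V (φ t))
    (hVnn : ∀ s : ℝ, 0 ≤ V s)
    (hVbot : Tendsto V atBot atTop)
    (hV'cont : Continuous (deriv V))
    (hV'neg : ∀ s : ℝ, deriv V s < 0)
    (hV'bdd : ∀ A : Set ℝ, Bornology.IsBounded (V '' A) →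
      Bornology.IsBounded (deriv V '' A))
    (hρt₀ : 0 < ρ t₀) (hH0 : 0 < H t₀) :
    Tendsto y atTop (nhds 0) ∧ Tendsto ρ atTop (nhds 0) ∧ Tendsto φ atTop atTop :=
  stmt_4_general t₀ γ hγ0 V φ y ρ H hφ hy hρ hH hρ0 hcon hVnn hVbot hV'cont hV'neg hV'bdd hH0
end

section
/- Suppose φ, y, ρ, H solve the flat scalar-field system on [t₀, ∞) with the Friedmann constraint 3H² = ρ + (1/2)y² + V(φ), where V(φ) ≥ 0 for all φ, V(φ) = 0 if and only if φ = 0 (so that also V'(0) = 0, since 0 is a minimum of the C² function V). If H(t₀) > 0, then H(t) > 0 for all t ≥ t₀; that is, the sign of H is preserved and an initially expanding flat universe remains ever-expanding. -/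
/-!
The constraint bounds the deceleration: since `ρ, V ≥ 0` and `γ ≤ 2`,
`-H' = y²/2 + γρ/2 ≤ ρ + y²/2 + V(φ) = 3H²`, i.e. `H' ≥ -3H²`. Hence `H` stays above the
solution `(1/H(t₀) + C (t - t₀))⁻¹` of the Riccati equation `u' = -C u²`, which is positive
for all time, by the fencing theorem for one-sided derivatives. That theorem needs a strict
inequality of derivatives where the two curves touch, hence `C > 3` rather than `C = 3`.
-/

open Set

theorem inv_add_mul_sub_inv_le_of_neg_mul_sq_lt_deriv {f f' : ℝ → ℝ} {a C : ℝ}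
    (hC : 0 < C) (hfa : 0 < f a)
    (hf : ∀ t ∈ Ici a, HasDerivWithinAt f (f' t) (Ici a) t)
    (hf' : ∀ t ∈ Ici a, 0 < f t → -C * f t ^ 2 < f' t) :
    ∀ t ∈ Ici a, ((f a)⁻¹ + C * (t - a))⁻¹ ≤ f t := by
  set u : ℝ → ℝ := fun t => ((f a)⁻¹ + C * (t - a))⁻¹
  have hden : ∀ t ∈ Ici a, 0 < (f a)⁻¹ + C * (t - a) := fun t ht => by
    have : 0 ≤ C * (t - a) := mul_nonneg hC.le (sub_nonneg.2 ht)
    positivity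
  have hu : ∀ t ∈ Ici a, HasDerivAt u (-C * u t ^ 2) t := fun t ht => by
    have hlin : HasDerivAt (fun s => (f a)⁻¹ + C * (s - a)) C t := by
      simpa using ((hasDerivAt_id t).sub_const a).const_mul C |>.const_add (f a)⁻¹
    refine (hlin.inv (hden t ht).ne').congr_deriv ?_
    simp only [u, inv_pow]
    ring
  intro t ht
  have hIcc : Icc a t ⊆ Ici a := Icc_subset_Ici_self
  refine image_le_of_deriv_right_lt_deriv_boundary' (f' := fun s => -C * u s ^ 2)
    (fun s hs => (hu s (hIcc hs)).continuousAt.continuousWithinAt)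
    (fun s hs => (hu s hs.1).hasDerivWithinAt) (by simp [u])
    (fun s hs => (hf s (hIcc hs)).continuousWithinAt.mono hIcc)
    (fun s hs => (hf s hs.1).mono (Ici_subset_Ici.2 hs.1))
    (fun s hs hus => ?_) ⟨ht, le_rfl⟩
  have hfs : 0 < f s := hus ▸ inv_pos.2 (hden s hs.1)
  rw [hus]
  exact hf' s hs.1 hfs

theorem pos_of_neg_mul_sq_le_deriv {f f' : ℝ → ℝ} {a C : ℝ} (hfa : 0 < f a)
    (hf : ∀ t ∈ Ici a, HasDerivWithinAt f (f' t) (Ici a) t)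
    (hf' : ∀ t ∈ Ici a, -C * f t ^ 2 ≤ f' t) :
    ∀ t ∈ Ici a, 0 < f t := by
  have hD : 0 < |C| + 1 := by positivity
  intro t ht
  refine lt_of_lt_of_le ?_ (inv_add_mul_sub_inv_le_of_neg_mul_sq_lt_deriv hD hfa hf
    (fun s hs hfs => lt_of_lt_of_le ?_ (hf' s hs)) t ht)
  · have : 0 ≤ (|C| + 1) * (t - a) := mul_nonneg hD.le (sub_nonneg.2 ht)
    positivity
  · nlinarith [pow_pos hfs 2, le_abs_self C]

theorem neg_three_mul_sq_le_of_friedmann {H y ρ v γ : ℝ} (hγ : γ ≤ 2) (hρ : 0 ≤ ρ) (hv : 0 ≤ v)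
    (hcon : 3 * H ^ 2 = ρ + 1 / 2 * y ^ 2 + v) : -3 * H ^ 2 ≤ -(1 / 2) * y ^ 2 - γ / 2 * ρ := by
  nlinarith

theorem stmt_7_general (t₀ γ : ℝ) (hγ2 : γ ≤ 2)
    (V : ℝ → ℝ)
    (φ y ρ H : ℝ → ℝ)
    (hH : ∀ t ∈ Set.Ici t₀,
      HasDerivWithinAt H (-(1 / 2) * y t ^ 2 - γ / 2 * ρ t) (Set.Ici t₀) t)
    (hρ0 : ∀ t ∈ Set.Ici t₀, 0 ≤ ρ t)
    (hcon : ∀ t ∈ Set.Ici t₀, 3 * H t ^ 2 = ρ t + 1 / 2 * y t ^ 2 + V (φ t))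
    (hVnn : ∀ s : ℝ, 0 ≤ V s)
    (hH0 : 0 < H t₀) :
    ∀ t ∈ Set.Ici t₀, 0 < H t :=
  pos_of_neg_mul_sq_le_deriv hH0 hH fun t ht =>
    neg_three_mul_sq_le_of_friedmann hγ2 (hρ0 t ht) (hVnn _) (hcon t ht)

/-- For the flat scalar-field system with a non-negative potential vanishing exactly at
`φ = 0`, an initially expanding universe remains ever-expanding: if `H(t₀) > 0` then
`H(t) > 0` for all `t ≥ t₀`. -/
theorem stmt_7 (t₀ γ : ℝ) (hγ0 : 0 < γ) (hγ2 : γ ≤ 2)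
    (V : ℝ → ℝ) (hV : ContDiff ℝ 2 V)
    (φ y ρ H : ℝ → ℝ)
    (hφ : ∀ t ∈ Set.Ici t₀, HasDerivWithinAt φ (y t) (Set.Ici t₀) t)
    (hy : ∀ t ∈ Set.Ici t₀,
      HasDerivWithinAt y (-3 * H t * y t - deriv V (φ t)) (Set.Ici t₀) t)
    (hρ : ∀ t ∈ Set.Ici t₀, HasDerivWithinAt ρ (-3 * γ * ρ t * H t) (Set.Ici t₀) t)
    (hH : ∀ t ∈ Set.Ici t₀,
      HasDerivWithinAt H (-(1 / 2) * y t ^ 2 - γ / 2 * ρ t) (Set.Ici t₀) t)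
    (hρ0 : ∀ t ∈ Set.Ici t₀, 0 ≤ ρ t)
    (hcon : ∀ t ∈ Set.Ici t₀, 3 * H t ^ 2 = ρ t + 1 / 2 * y t ^ 2 + V (φ t))
    (hVnn : ∀ s : ℝ, 0 ≤ V s)
    (hVzero : ∀ s : ℝ, V s = 0 ↔ s = 0)
    (hH0 : 0 < H t₀) :
    ∀ t ∈ Set.Ici t₀, 0 < H t :=
  stmt_7_general t₀ γ hγ2 V φ y ρ H hH hρ0 hcon hVnn hH0
end

section
/- Let V₀ > 0, γ > 0, and c > 0 be real numbers. Then every complex root of the polynomial (X + γ√(3V₀)) · (X² + √(3V₀)·X + c) has strictly negative real part. (Hence the equilibrium (φ₁, 0, √(V₀/3)) of the reduced system, at a point φ₁ which is a local minimum of V with V(φ₁) = V₀ > 0 and V''(φ₁) = c > 0, is future asymptotically stable; it corresponds to a vacuum de Sitter space with cosmological constant √V₀.) -/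
open Polynomial

def IsHurwitzStable (p : ℂ[X]) : Prop :=
  ∀ z : ℂ, p.IsRoot z → z.re < 0

theorem IsHurwitzStable.mul {p q : ℂ[X]} (hp : IsHurwitzStable p) (hq : IsHurwitzStable q) :
    IsHurwitzStable (p * q) := fun z hz =>
  (root_mul.mp hz).elim (hp z) (hq z)

theorem isHurwitzStable_X_add_C {a : ℝ} (ha : 0 < a) : IsHurwitzStable (X + C (a : ℂ)) := by
  intro z hz
  have hz : z = -(a : ℂ) := by simpa [eq_neg_iff_add_eq_zero] using hz
  simpa [hz] using ha

/-- A non-real root `x + iy` has `x = -b/2`, since the imaginary part of the equation is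
`y (2x + b) = 0`; a real root is negative because `x² + bx + c > 0` for `x ≥ 0`. -/
theorem isHurwitzStable_X_sq_add_C_mul_X_add_C {b c : ℝ} (hb : 0 < b) (hc : 0 < c) :
    IsHurwitzStable (X ^ 2 + C (b : ℂ) * X + C (c : ℂ)) := by
  intro z hz
  have hz : z ^ 2 + b * z + c = 0 := by simpa using hz
  have hre : z.re ^ 2 - z.im ^ 2 + b * z.re + c = 0 := by
    simpa [pow_two] using congrArg Complex.re hz
  have him : z.im * (2 * z.re + b) = 0 := by
    have := congrArg Complex.im hz
    simp only [pow_two, Complex.add_im, Complex.mul_im, Complex.ofReal_re,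
      Complex.ofReal_im, Complex.zero_im] at this
    linear_combination this
  rcases mul_eq_zero.mp him with hreal | hcentre
  · rw [hreal] at hre
    nlinarith
  · linarith

/-- Every complex root of the characteristic polynomial
`(X + γ√(3V₀)) (X² + √(3V₀) X + c)` (with `V₀ > 0`, `γ > 0`, `c > 0`) has strictly
negative real part; hence the corresponding equilibrium of the reduced flat FRW
scalar-field system is future asymptotically stable. -/
theorem stmt_14 (V₀ γ c : ℝ) (hV₀ : 0 < V₀) (hγ : 0 < γ) (hc : 0 < c) :
    ∀ z : ℂ,
      ((X + C ((γ * Real.sqrt (3 * V₀) : ℝ) : ℂ)) *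
        (X ^ 2 + C ((Real.sqrt (3 * V₀) : ℝ) : ℂ) * X + C ((c : ℝ) : ℂ))).IsRoot z →
      z.re < 0 := by
  have hb : 0 < Real.sqrt (3 * V₀) := Real.sqrt_pos.mpr (by positivity)
  exact (isHurwitzStable_X_add_C (mul_pos hγ hb)).mul
    (isHurwitzStable_X_sq_add_C_mul_X_add_C hb hc)
end

section
/- Suppose x, φ, y, ρ, H : [t₀, ∞) → ℝ are differentiable and solve the negatively curved (k = -1) scalar-field system: x' = -Hx, φ' = y, y' = -3Hy - V'(φ), ρ' = -3γρH, H' = -(1/2)y² - (γ/2)ρ - x², with ρ(t) ≥ 0 and x(t) > 0 for all t, subject to the constraint 3H² - 3x² = ρ + (1/2)y² + V(φ), where V : ℝ → ℝ is C², γ is a constant with 0 < γ ≤ 2, V(φ) ≥ 0 for all φ, V(φ) = 0 if and only if φ = 0, V' is bounded on every subset of ℝ on which V is bounded, and H(t₀) > 0. Then ρ(t) → 0, y(t) → 0, and x(t) → 0 as t → ∞. -/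
/-! The constraint gives `H² ≥ x² > 0`, so `H` never vanishes and, starting positive, stays
positive; as `H' ≤ 0` it decreases, hence `0 < H ≤ H(t₀)`. The constraint then bounds `ρ`, `y`,
`x` and `V(φ)`, hence `V'(φ)`, and with them the derivatives of `ρ`, `y²` and `x²`, which are
therefore uniformly continuous. Each of these nonnegative quantities is dominated by a multiple
of `-H'`, where `H` is monotone and bounded below; Barbalat's lemma makes all three tend to `0`. -/

open Filter Set Topology

theorem le_sub_mul_of_hasDerivWithinAt_Ici_le {a s t m : ℝ} {F F' : ℝ → ℝ}
    (hF : ∀ u ∈ Ici a, HasDerivWithinAt F (F' u) (Ici a) u) (hm : ∀ u ∈ Ico s t, F' u ≤ -m)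
    (has : a ≤ s) (hst : s ≤ t) : F t ≤ F s - m * (t - s) := by
  have hsub : Icc s t ⊆ Ici a := fun u hu => has.trans hu.1
  refine image_le_of_deriv_right_le_deriv_boundary (B' := fun _ => -(m * 1))
    (fun u hu => (hF u (hsub hu)).continuousWithinAt.mono hsub)
    (fun u hu => (hF u (hsub (Ico_subset_Icc_self hu))).mono (Ici_subset_Ici.2 (has.trans hu.1)))
    (by simp) (by fun_prop)
    (fun u _ => (((hasDerivWithinAt_id u _).sub_const s).const_mul m).const_sub (F s))
    (fun u hu => by simpa using hm u hu) ⟨hst, le_rfl⟩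

theorem AntitoneOn.exists_tendsto_atTop_of_bddBelow {a : ℝ} {F : ℝ → ℝ}
    (hF : AntitoneOn F (Ici a)) (hb : BddBelow (F '' Ici a)) : ∃ L, Tendsto F atTop (𝓝 L) := by
  have hg : Antitone fun t => F (max t a) := fun s t hst =>
    hF (le_max_right s a) (le_max_right t a) (max_le_max_right a hst)
  have hgb : BddBelow (range fun t => F (max t a)) :=
    hb.mono (range_subset_iff.2 fun t => mem_image_of_mem F (le_max_right t a))
  refine ⟨_, (tendsto_atTop_ciInf hg hgb).congr' ?_⟩
  filter_upwards [eventually_ge_atTop a] with t ht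
  rw [max_eq_left ht]

theorem Convex.uniformContinuousOn_of_hasDerivWithinAt_abs_le {s : Set ℝ} (hs : Convex ℝ s)
    {f f' : ℝ → ℝ} {K : ℝ} (hf : ∀ t ∈ s, HasDerivWithinAt f (f' t) s t)
    (hK : ∀ t ∈ s, |f' t| ≤ K) : UniformContinuousOn f s := by
  refine (hs.lipschitzOnWith_of_nnnorm_hasDerivWithin_le (C := K.toNNReal) hf fun t ht => ?_)
    |>.uniformContinuousOn
  rw [← NNReal.coe_le_coe, coe_nnnorm, Real.norm_eq_abs, Real.coe_toNNReal']
  exact le_max_of_le_left (hK t ht)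

/-- Barbalat's lemma: `f ≤ -F'` with `F` bounded below makes `∫_a^∞ f` finite. -/
theorem tendsto_zero_of_uniformContinuousOn_of_le_neg_deriv {a : ℝ} {f F F' : ℝ → ℝ}
    (hf : UniformContinuousOn f (Ici a)) (hf0 : ∀ t ∈ Ici a, 0 ≤ f t)
    (hF : ∀ t ∈ Ici a, HasDerivWithinAt F (F' t) (Ici a) t)
    (hfF : ∀ t ∈ Ici a, f t ≤ -F' t) (hFb : BddBelow (F '' Ici a)) :
    Tendsto f atTop (𝓝 0) := by
  have hFanti : AntitoneOn F (Ici a) := fun s hs t _ hst => by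
    simpa using le_sub_mul_of_hasDerivWithinAt_Ici_le hF (m := 0)
      (fun u hu => by linarith [hf0 u (hs.trans hu.1), hfF u (hs.trans hu.1)]) hs hst
  obtain ⟨L, hL⟩ := hFanti.exists_tendsto_atTop_of_bddBelow hFb
  rw [Metric.tendsto_atTop]
  intro ε hε
  obtain ⟨δ, hδ, hfδ⟩ := Metric.uniformContinuousOn_iff.1 hf (ε / 2) (half_pos hε)
  have hdrop : Tendsto (fun t => F t - F (t + δ / 2)) atTop (𝓝 0) := by
    simpa using hL.sub (hL.comp (tendsto_atTop_add_const_right _ (δ / 2) tendsto_id))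
  obtain ⟨N, hN⟩ := Metric.tendsto_atTop.1 hdrop (ε / 2 * (δ / 2)) (by positivity)
  refine ⟨max N a, fun t ht => ?_⟩
  have hta : a ≤ t := le_of_max_le_right ht
  rw [Real.dist_eq, sub_zero, abs_of_nonneg (hf0 t hta)]
  by_contra! hft
  -- If `f t ≥ ε`, then `f ≥ ε/2` on `[t, t + δ/2]`, and `F` drops there by `ε/2 * δ/2`.
  have hfar : ∀ u ∈ Ico t (t + δ / 2), F' u ≤ -(ε / 2) := fun u hu => by
    have hau : a ≤ u := hta.trans hu.1
    have hdist : dist t u < δ := by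
      rw [Real.dist_eq, abs_sub_comm, abs_of_nonneg (sub_nonneg.2 hu.1)]
      linarith [hu.2]
    have := hfδ t hta u hau hdist
    rw [Real.dist_eq] at this
    linarith [(abs_lt.1 this).2, hfF u hau]
  have hfall := le_sub_mul_of_hasDerivWithinAt_Ici_le hF hfar hta (by linarith)
  have hsmall := hN t (le_of_max_le_left ht)
  rw [Real.dist_eq, sub_zero] at hsmall
  linarith [(abs_lt.1 hsmall).2]

theorem tendsto_zero_of_tendsto_sq_zero {α : Type*} {l : Filter α} {g : α → ℝ}
    (h : Tendsto (fun t => g t ^ 2) l (𝓝 0)) : Tendsto g l (𝓝 0) := by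
  refine (tendsto_zero_iff_abs_tendsto_zero g).2 ?_
  simpa [Function.comp_def, Real.sqrt_sq_eq_abs] using h.sqrt

theorem IsPreconnected.pos_of_ne_zero {X : Type*} [TopologicalSpace X] {s : Set X} {f : X → ℝ}
    {a : X} (hs : IsPreconnected s) (hf : ContinuousOn f s) (hne : ∀ t ∈ s, f t ≠ 0)
    (ha : a ∈ s) (hfa : 0 < f a) : ∀ t ∈ s, 0 < f t := fun t ht => by
  by_contra! hft
  obtain ⟨u, hu, hu0⟩ := hs.intermediate_value ht ha hf ⟨hft, hfa.le⟩
  exact hne u hu hu0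

/-- "Open" refers to the curvature `k = -1`; `x = 1/a` and `y = φ̇`. -/
structure IsOpenFRWSolution (t₀ γ : ℝ) (V x φ y ρ H : ℝ → ℝ) : Prop where
  hasDerivWithinAt_x : ∀ t ∈ Ici t₀, HasDerivWithinAt x (-(H t) * x t) (Ici t₀) t
  hasDerivWithinAt_y : ∀ t ∈ Ici t₀,
    HasDerivWithinAt y (-3 * H t * y t - deriv V (φ t)) (Ici t₀) t
  hasDerivWithinAt_rho : ∀ t ∈ Ici t₀, HasDerivWithinAt ρ (-3 * γ * ρ t * H t) (Ici t₀) t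
  hasDerivWithinAt_H : ∀ t ∈ Ici t₀,
    HasDerivWithinAt H (-(1 / 2) * y t ^ 2 - γ / 2 * ρ t - x t ^ 2) (Ici t₀) t
  rho_nonneg : ∀ t ∈ Ici t₀, 0 ≤ ρ t
  x_pos : ∀ t ∈ Ici t₀, 0 < x t
  constraint : ∀ t ∈ Ici t₀, 3 * H t ^ 2 - 3 * x t ^ 2 = ρ t + 1 / 2 * y t ^ 2 + V (φ t)

namespace IsOpenFRWSolution

variable {t₀ γ : ℝ} {V x φ y ρ H : ℝ → ℝ} {t : ℝ}

theorem sq_x_le (h : IsOpenFRWSolution t₀ γ V x φ y ρ H) (hV : ∀ s, 0 ≤ V s) (ht : t ∈ Ici t₀) :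
    x t ^ 2 ≤ H t ^ 2 := by
  nlinarith [h.constraint t ht, h.rho_nonneg t ht, hV (φ t), sq_nonneg (y t)]

theorem rho_le (h : IsOpenFRWSolution t₀ γ V x φ y ρ H) (hV : ∀ s, 0 ≤ V s) (ht : t ∈ Ici t₀) :
    ρ t ≤ 3 * H t ^ 2 := by
  nlinarith [h.constraint t ht, hV (φ t), sq_nonneg (x t), sq_nonneg (y t)]

theorem sq_y_le (h : IsOpenFRWSolution t₀ γ V x φ y ρ H) (hV : ∀ s, 0 ≤ V s) (ht : t ∈ Ici t₀) :
    y t ^ 2 ≤ 6 * H t ^ 2 := by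
  nlinarith [h.constraint t ht, h.rho_nonneg t ht, hV (φ t), sq_nonneg (x t)]

theorem potential_le (h : IsOpenFRWSolution t₀ γ V x φ y ρ H) (ht : t ∈ Ici t₀) :
    V (φ t) ≤ 3 * H t ^ 2 := by
  nlinarith [h.constraint t ht, h.rho_nonneg t ht, sq_nonneg (x t), sq_nonneg (y t)]

theorem deriv_H_nonpos (h : IsOpenFRWSolution t₀ γ V x φ y ρ H) (hγ : 0 ≤ γ)
    (ht : t ∈ Ici t₀) : -(1 / 2) * y t ^ 2 - γ / 2 * ρ t - x t ^ 2 ≤ 0 := by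
  nlinarith [mul_nonneg hγ (h.rho_nonneg t ht), sq_nonneg (x t), sq_nonneg (y t)]

theorem H_pos (h : IsOpenFRWSolution t₀ γ V x φ y ρ H) (hV : ∀ s, 0 ≤ V s) (hH0 : 0 < H t₀) :
    ∀ t ∈ Ici t₀, 0 < H t :=
  isPreconnected_Ici.pos_of_ne_zero (fun t ht => (h.hasDerivWithinAt_H t ht).continuousWithinAt)
    (fun t ht hHt => by nlinarith [h.sq_x_le hV ht, h.x_pos t ht]) self_mem_Ici hH0

theorem H_le (h : IsOpenFRWSolution t₀ γ V x φ y ρ H) (hγ : 0 ≤ γ) (ht : t ∈ Ici t₀) :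
    H t ≤ H t₀ := by
  simpa using le_sub_mul_of_hasDerivWithinAt_Ici_le h.hasDerivWithinAt_H (m := 0)
    (fun u hu => by simpa using h.deriv_H_nonpos hγ hu.1) le_rfl ht

theorem sq_H_le (h : IsOpenFRWSolution t₀ γ V x φ y ρ H) (hγ : 0 ≤ γ) (hV : ∀ s, 0 ≤ V s)
    (hH0 : 0 < H t₀) (ht : t ∈ Ici t₀) : H t ^ 2 ≤ H t₀ ^ 2 :=
  pow_le_pow_left₀ (h.H_pos hV hH0 t ht).le (h.H_le hγ ht) 2

theorem bddBelow_const_mul_H (h : IsOpenFRWSolution t₀ γ V x φ y ρ H) (hV : ∀ s, 0 ≤ V s)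
    (hH0 : 0 < H t₀) {c : ℝ} (hc : 0 ≤ c) : BddBelow ((fun t => c * H t) '' Ici t₀) :=
  ⟨0, by rintro _ ⟨t, ht, rfl⟩; exact mul_nonneg hc (h.H_pos hV hH0 t ht).le⟩

theorem exists_abs_deriv_potential_le (h : IsOpenFRWSolution t₀ γ V x φ y ρ H) (hγ : 0 ≤ γ)
    (hV : ∀ s, 0 ≤ V s)
    (hV' : ∀ A : Set ℝ, Bornology.IsBounded (V '' A) → Bornology.IsBounded (deriv V '' A))
    (hH0 : 0 < H t₀) : ∃ C, ∀ t ∈ Ici t₀, |deriv V (φ t)| ≤ C := by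
  have hVφ : Bornology.IsBounded (V '' (φ '' Ici t₀)) := by
    refine (Metric.isBounded_Icc 0 (3 * H t₀ ^ 2)).subset ?_
    rintro _ ⟨_, ⟨t, ht, rfl⟩, rfl⟩
    exact ⟨hV _, (h.potential_le ht).trans (by linarith [h.sq_H_le hγ hV hH0 ht])⟩
  obtain ⟨C, hC⟩ := (hV' _ hVφ).exists_norm_le
  exact ⟨C, fun t ht => hC _ ⟨φ t, ⟨t, ht, rfl⟩, rfl⟩⟩

theorem tendsto_rho (h : IsOpenFRWSolution t₀ γ V x φ y ρ H) (hγ : 0 < γ) (hV : ∀ s, 0 ≤ V s)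
    (hH0 : 0 < H t₀) : Tendsto ρ atTop (𝓝 0) := by
  set B := H t₀
  refine tendsto_zero_of_uniformContinuousOn_of_le_neg_deriv
    ((convex_Ici t₀).uniformContinuousOn_of_hasDerivWithinAt_abs_le h.hasDerivWithinAt_rho
      (K := 9 * γ * B ^ 3) fun t ht => ?_)
    h.rho_nonneg (fun t ht => (h.hasDerivWithinAt_H t ht).const_mul (2 / γ)) (fun t ht => ?_)
    (h.bddBelow_const_mul_H hV hH0 (by positivity))
  · have hHt := h.H_pos hV hH0 t ht
    have hρH : ρ t * H t ≤ 3 * B ^ 2 * B :=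
      mul_le_mul ((h.rho_le hV ht).trans (by linarith [h.sq_H_le hγ.le hV hH0 ht]))
        (h.H_le hγ.le ht) hHt.le (by positivity)
    rw [abs_of_nonpos (by nlinarith [mul_nonneg (h.rho_nonneg t ht) hHt.le])]
    nlinarith
  · field_simp
    nlinarith [h.rho_nonneg t ht, sq_nonneg (y t), sq_nonneg (x t)]

theorem tendsto_y (h : IsOpenFRWSolution t₀ γ V x φ y ρ H) (hγ : 0 ≤ γ) (hV : ∀ s, 0 ≤ V s)
    (hV' : ∀ A : Set ℝ, Bornology.IsBounded (V '' A) → Bornology.IsBounded (deriv V '' A))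
    (hH0 : 0 < H t₀) : Tendsto y atTop (𝓝 0) := by
  set B := H t₀
  obtain ⟨C, hC⟩ := h.exists_abs_deriv_potential_le hγ hV hV' hH0
  have hy2 : ∀ t ∈ Ici t₀, HasDerivWithinAt (fun t => y t ^ 2)
      (2 * y t * (-3 * H t * y t - deriv V (φ t))) (Ici t₀) t := fun t ht =>
    (h.hasDerivWithinAt_y t ht).fun_pow 2 |>.congr_deriv (by norm_num)
  refine tendsto_zero_of_tendsto_sq_zero (tendsto_zero_of_uniformContinuousOn_of_le_neg_deriv
    ((convex_Ici t₀).uniformContinuousOn_of_hasDerivWithinAt_abs_le hy2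
      (K := 6 * B * (9 * B ^ 2 + C)) fun t ht => ?_)
    (fun t _ => sq_nonneg (y t)) (fun t ht => (h.hasDerivWithinAt_H t ht).const_mul 2)
    (fun t ht => ?_) (h.bddBelow_const_mul_H hV hH0 zero_le_two))
  · have hyB : |y t| ≤ 3 * B := abs_le_of_sq_le_sq
      (by nlinarith [h.sq_y_le hV ht, h.sq_H_le hγ hV hH0 ht]) (by positivity)
    have hy' : |-3 * H t * y t - deriv V (φ t)| ≤ 9 * B ^ 2 + C := by
      calc |-3 * H t * y t - deriv V (φ t)| ≤ |-3 * H t * y t| + |deriv V (φ t)| := abs_sub _ _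
        _ = 3 * H t * |y t| + |deriv V (φ t)| := by
            rw [abs_mul, abs_mul, abs_of_pos (h.H_pos hV hH0 t ht)]
            norm_num
        _ ≤ 3 * B * (3 * B) + C := by
            gcongr
            exacts [h.H_le hγ ht, hC t ht]
        _ = 9 * B ^ 2 + C := by ring
    rw [abs_mul, abs_mul, abs_two]
    nlinarith [abs_nonneg (y t), abs_nonneg (-3 * H t * y t - deriv V (φ t))]
  · nlinarith [mul_nonneg hγ (h.rho_nonneg t ht), sq_nonneg (x t)]

theorem tendsto_x (h : IsOpenFRWSolution t₀ γ V x φ y ρ H) (hγ : 0 ≤ γ) (hV : ∀ s, 0 ≤ V s)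
    (hH0 : 0 < H t₀) : Tendsto x atTop (𝓝 0) := by
  set B := H t₀
  have hx2 : ∀ t ∈ Ici t₀, HasDerivWithinAt (fun t => x t ^ 2)
      (2 * x t * (-(H t) * x t)) (Ici t₀) t := fun t ht =>
    (h.hasDerivWithinAt_x t ht).fun_pow 2 |>.congr_deriv (by norm_num)
  refine tendsto_zero_of_tendsto_sq_zero (tendsto_zero_of_uniformContinuousOn_of_le_neg_deriv
    ((convex_Ici t₀).uniformContinuousOn_of_hasDerivWithinAt_abs_le hx2 (K := 2 * B ^ 3)
      fun t ht => ?_)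
    (fun t _ => sq_nonneg (x t)) (fun t ht => (h.hasDerivWithinAt_H t ht).const_mul 1)
    (fun t ht => ?_) (h.bddBelow_const_mul_H hV hH0 zero_le_one))
  · have hHt := h.H_pos hV hH0 t ht
    rw [show 2 * x t * (-(H t) * x t) = -(2 * H t * x t ^ 2) by ring, abs_neg,
      abs_of_nonneg (by positivity)]
    have hxB : x t ^ 2 ≤ B ^ 2 := (h.sq_x_le hV ht).trans (h.sq_H_le hγ hV hH0 ht)
    nlinarith [mul_le_mul (h.H_le hγ ht) hxB (sq_nonneg (x t)) hH0.le]
  · nlinarith [mul_nonneg hγ (h.rho_nonneg t ht), sq_nonneg (y t)]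

end IsOpenFRWSolution

theorem stmt_15_general (t₀ γ : ℝ) (hγ0 : 0 < γ)
    (V : ℝ → ℝ)
    (x φ y ρ H : ℝ → ℝ)
    (hx : ∀ t ∈ Set.Ici t₀, HasDerivWithinAt x (-(H t) * x t) (Set.Ici t₀) t)
    (hy : ∀ t ∈ Set.Ici t₀,
      HasDerivWithinAt y (-3 * H t * y t - deriv V (φ t)) (Set.Ici t₀) t)
    (hρ : ∀ t ∈ Set.Ici t₀, HasDerivWithinAt ρ (-3 * γ * ρ t * H t) (Set.Ici t₀) t)
    (hH : ∀ t ∈ Set.Ici t₀,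
      HasDerivWithinAt H (-(1 / 2) * y t ^ 2 - γ / 2 * ρ t - x t ^ 2) (Set.Ici t₀) t)
    (hρ0 : ∀ t ∈ Set.Ici t₀, 0 ≤ ρ t)
    (hxpos : ∀ t ∈ Set.Ici t₀, 0 < x t)
    (hcon : ∀ t ∈ Set.Ici t₀,
      3 * H t ^ 2 - 3 * x t ^ 2 = ρ t + 1 / 2 * y t ^ 2 + V (φ t))
    (hVnn : ∀ s : ℝ, 0 ≤ V s)
    (hV'bdd : ∀ A : Set ℝ, Bornology.IsBounded (V '' A) →
      Bornology.IsBounded (deriv V '' A))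
    (hH0 : 0 < H t₀) :
    Tendsto ρ atTop (nhds 0) ∧ Tendsto y atTop (nhds 0) ∧
      Tendsto x atTop (nhds 0) := by
  have h : IsOpenFRWSolution t₀ γ V x φ y ρ H := ⟨hx, hy, hρ, hH, hρ0, hxpos, hcon⟩
  exact ⟨h.tendsto_rho hγ0 hVnn hH0, h.tendsto_y hγ0.le hVnn hV'bdd hH0,
    h.tendsto_x hγ0.le hVnn hH0⟩

/-- Extension of Proposition 2 to negatively curved (`k = -1`) FRW models: under the same
assumptions on the potential and `H(t₀) > 0`, one has `ρ → 0`, `y → 0` and `x = 1/a → 0`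
as `t → ∞`. -/
theorem stmt_15 (t₀ γ : ℝ) (hγ0 : 0 < γ) (hγ2 : γ ≤ 2)
    (V : ℝ → ℝ) (hV : ContDiff ℝ 2 V)
    (x φ y ρ H : ℝ → ℝ)
    (hx : ∀ t ∈ Set.Ici t₀, HasDerivWithinAt x (-(H t) * x t) (Set.Ici t₀) t)
    (hφ : ∀ t ∈ Set.Ici t₀, HasDerivWithinAt φ (y t) (Set.Ici t₀) t)
    (hy : ∀ t ∈ Set.Ici t₀,
      HasDerivWithinAt y (-3 * H t * y t - deriv V (φ t)) (Set.Ici t₀) t)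
    (hρ : ∀ t ∈ Set.Ici t₀, HasDerivWithinAt ρ (-3 * γ * ρ t * H t) (Set.Ici t₀) t)
    (hH : ∀ t ∈ Set.Ici t₀,
      HasDerivWithinAt H (-(1 / 2) * y t ^ 2 - γ / 2 * ρ t - x t ^ 2) (Set.Ici t₀) t)
    (hρ0 : ∀ t ∈ Set.Ici t₀, 0 ≤ ρ t)
    (hxpos : ∀ t ∈ Set.Ici t₀, 0 < x t)
    (hcon : ∀ t ∈ Set.Ici t₀,
      3 * H t ^ 2 - 3 * x t ^ 2 = ρ t + 1 / 2 * y t ^ 2 + V (φ t))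
    (hVnn : ∀ s : ℝ, 0 ≤ V s)
    (hVzero : ∀ s : ℝ, V s = 0 ↔ s = 0)
    (hV'bdd : ∀ A : Set ℝ, Bornology.IsBounded (V '' A) →
      Bornology.IsBounded (deriv V '' A))
    (hH0 : 0 < H t₀) :
    Tendsto ρ atTop (nhds 0) ∧ Tendsto y atTop (nhds 0) ∧
      Tendsto x atTop (nhds 0) :=
  stmt_15_general t₀ γ hγ0 V x φ y ρ H hx hy hρ hH hρ0 hxpos hcon hVnn hV'bdd hH0
end

section
/- Suppose x, φ, y, ρ, H : [t₀, ∞) → ℝ are differentiable and solve the negatively curved (k = -1) scalar-field system: x' = -Hx, φ' = y, y' = -3Hy - V'(φ), ρ' = -3γρH, H' = -(1/2)y² - (γ/2)ρ - x², with ρ(t) ≥ 0 and x(t) > 0 for all t, subject to the constraint 3H² - 3x² = ρ + (1/2)y² + V(φ), where V : ℝ → ℝ is C², γ is a constant with 0 < γ ≤ 2, H(t₀) > 0, V(φ) ≥ 0 for all φ, V(φ) = 0 if and only if φ = 0, V' is bounded on every subset of ℝ on which V is bounded, V'(φ) > 0 for φ > 0, and V'(φ) < 0 for φ < 0. Then as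 t → ∞, exactly one of the following holds: φ(t) → +∞, or φ(t) → -∞, or φ(t) → 0. -/
/-!
The constraint gives `3 H² ≥ 3 x² > 0`, so `H` never vanishes and stays positive; since
`H' ≤ -y²/2`, `H` decreases to a finite limit and `∫ y² < ∞`. The energy `E = y²/2 + V(φ)`
satisfies `E' = -3 H y² ≤ 0`, so `y` and `V(φ)` stay bounded, hence so do `V'(φ)` and `y'`;
a Barbalat-type argument then gives `y → 0`, and `V(φ)` converges to the limit `L` of `E`.
If `L = 0` then `φ → 0`. If `L > 0`, `φ` eventually keeps one sign, and if it did not escape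
to `±∞` it would be trapped in a compact interval away from `0`, where `|V'| ≥ m > 0`; then
`y' = -3 H y - V'(φ)` would eventually stay beyond `m / 2` in absolute value, contradicting
`y → 0`.
-/

open Filter Set Topology

section Calculus

variable {t₀ : ℝ} {f f' : ℝ → ℝ}

theorem antitoneOn_of_hasDerivWithinAt_Ici_nonpos {s : Set ℝ}
    (hf : ∀ t ∈ Ici t₀, HasDerivWithinAt f (f' t) (Ici t₀) t) (hs : Convex ℝ s)
    (hst : s ⊆ Ici t₀) (hf' : ∀ t ∈ s, f' t ≤ 0) : AntitoneOn f s :=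
  antitoneOn_of_hasDerivWithinAt_nonpos hs
    (fun t ht => (hf t (hst ht)).continuousWithinAt.mono hst)
    (fun t ht => (hf t (hst (interior_subset ht))).mono (interior_subset.trans hst))
    (fun t ht => hf' t (interior_subset ht))

theorem AntitoneOn.exists_tendsto_atTop_s16 (hf : AntitoneOn f (Ici t₀))
    (hbdd : BddBelow (f '' Ici t₀)) : ∃ l, Tendsto f atTop (𝓝 l) := by
  have hanti : Antitone fun t => f (max t t₀) := fun a b hab =>
    hf (le_max_right a t₀) (le_max_right b t₀) (max_le_max_right t₀ hab)
  have hbdd' : BddBelow (range fun t => f (max t t₀)) :=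
    hbdd.mono (range_subset_iff.2 fun t => mem_image_of_mem f (le_max_right t t₀))
  refine ⟨_, (tendsto_atTop_ciInf hanti hbdd').congr' ?_⟩
  filter_upwards [eventually_ge_atTop t₀] with t ht
  rw [max_eq_left ht]

theorem tendsto_atBot_of_hasDerivWithinAt_le_neg {m : ℝ}
    (hf : ∀ t ∈ Ici t₀, HasDerivWithinAt f (f' t) (Ici t₀) t) (hm : 0 < m)
    (hf' : ∀ᶠ t in atTop, f' t ≤ -m) : Tendsto f atTop atBot := by
  obtain ⟨T, hT⟩ := eventually_atTop.1 (hf'.and (eventually_ge_atTop t₀))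
  have hg : ∀ t ∈ Ici t₀, HasDerivWithinAt (fun s => f s + m * s) (f' t + m) (Ici t₀) t :=
    fun t ht => ((hf t ht).add ((hasDerivWithinAt_id t _).const_mul m)).congr_deriv (by simp)
  have hanti : AntitoneOn (fun s => f s + m * s) (Ici T) :=
    antitoneOn_of_hasDerivWithinAt_Ici_nonpos hg (convex_Ici T)
      (fun t ht => (hT t ht).2) (fun t ht => by linarith [(hT t ht).1])
  refine tendsto_atBot_mono' _ ?_ (tendsto_atBot_add_const_left _ (f T + m * T)
    (tendsto_id.const_mul_atTop_of_neg (neg_lt_zero.2 hm)))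
  filter_upwards [eventually_ge_atTop T] with t ht
  have := hanti self_mem_Ici ht ht
  simp only [id] at this ⊢
  linarith

theorem IsPreconnected.pos_or_neg_of_ne_zero {s : Set ℝ} (hs : IsPreconnected s)
    (hf : ContinuousOn f s) (h0 : ∀ t ∈ s, f t ≠ 0) :
    (∀ t ∈ s, 0 < f t) ∨ ∀ t ∈ s, f t < 0 := by
  by_contra! h
  obtain ⟨⟨a, ha, hfa⟩, ⟨b, hb, hfb⟩⟩ := h
  obtain ⟨c, hc, hfc⟩ := hs.intermediate_value ha hb hf ⟨hfa, hfb⟩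
  exact h0 c hc hfc

theorem tendsto_zero_of_hasDerivWithinAt_le_neg_sq {y y' G G' : ℝ → ℝ} {C c : ℝ}
    (hy : ∀ t ∈ Ici t₀, HasDerivWithinAt y (y' t) (Ici t₀) t) (hy' : ∀ t ∈ Ici t₀, |y' t| ≤ C)
    (hG : ∀ t ∈ Ici t₀, HasDerivWithinAt G (G' t) (Ici t₀) t) (hc : 0 < c)
    (hG' : ∀ t ∈ Ici t₀, G' t ≤ -c * y t ^ 2) (hGbdd : BddBelow (G '' Ici t₀)) :
    Tendsto y atTop (𝓝 0) := by
  have hGanti : AntitoneOn G (Ici t₀) :=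
    antitoneOn_of_hasDerivWithinAt_Ici_nonpos hG (convex_Ici t₀) subset_rfl
      fun t ht => (hG' t ht).trans (by nlinarith [sq_nonneg (y t)])
  obtain ⟨l, hl⟩ := hGanti.exists_tendsto_atTop_s16 hGbdd
  rw [Metric.tendsto_nhds]
  by_contra! hfreq
  obtain ⟨ε, hε, hfreq⟩ := hfreq
  simp only [Real.dist_eq, sub_zero] at hfreq
  have hC : 0 ≤ C := (abs_nonneg _).trans (hy' t₀ self_mem_Ici)
  set τ := ε / (2 * (C + 1)) with hτ_def
  have hτ : 0 < τ := by positivity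
  have hCτ : (C + 1) * τ = ε / 2 := by rw [hτ_def]; field_simp
  set d := c * (ε / 2) ^ 2 with hd_def
  have hd : 0 < d := by positivity
  -- `G` converges, so its drop over a window of length `τ` is eventually below `d * τ`, while
  -- a window starting where `|y| ≥ ε` has `|y| ≥ ε / 2` throughout and `G` drops by `d * τ`.
  have hdrop : ∀ᶠ a in atTop, G a - G (a + τ) < d * τ := by
    have := hl.sub (hl.comp (tendsto_atTop_add_const_right _ τ tendsto_id))
    rw [sub_self] at this
    exact this.eventually (gt_mem_nhds (by positivity))
  obtain ⟨a, hya, hGa, ha⟩ := (hfreq.and_eventually (hdrop.and (eventually_ge_atTop t₀))).exists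
  have hwindow : ∀ s ∈ Icc a (a + τ), ε / 2 ≤ |y s| := by
    intro s hs
    have hlip := Convex.norm_image_sub_le_of_norm_hasDerivWithin_le hy hy' (convex_Ici t₀)
      (show a ∈ Ici t₀ from ha) (show s ∈ Ici t₀ from ha.trans hs.1)
    rw [Real.norm_eq_abs, Real.norm_eq_abs, abs_of_nonneg (sub_nonneg.2 hs.1)] at hlip
    have := abs_sub_abs_le_abs_sub (y a) (y s)
    rw [abs_sub_comm] at this
    nlinarith [hs.2]
  have hg : ∀ t ∈ Ici t₀, HasDerivWithinAt (fun s => G s + d * s) (G' t + d) (Ici t₀) t :=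
    fun t ht => ((hG t ht).add ((hasDerivWithinAt_id t _).const_mul d)).congr_deriv (by simp)
  have hanti : AntitoneOn (fun s => G s + d * s) (Icc a (a + τ)) :=
    antitoneOn_of_hasDerivWithinAt_Ici_nonpos hg (convex_Icc _ _)
      (fun s hs => ha.trans hs.1) fun s hs => by
        have hsq : (ε / 2) ^ 2 ≤ y s ^ 2 := by
          rw [← sq_abs (y s)]; gcongr; exact hwindow s hs
        nlinarith [hG' s (ha.trans hs.1), mul_le_mul_of_nonneg_left hsq hc.le]
  have := hanti (left_mem_Icc.2 (by linarith)) (right_mem_Icc.2 (by linarith)) (by linarith)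
  simp only at this
  nlinarith

end Calculus

section Potential

variable {V φ : ℝ → ℝ}

theorem tendsto_zero_of_tendsto_comp_zero {α : Type*} {l : Filter α} {φ : α → ℝ}
    (hmono : MonotoneOn V (Ici 0)) (hanti : AntitoneOn V (Iic 0)) (hpos : ∀ s ≠ 0, 0 < V s)
    (h : Tendsto (fun t => V (φ t)) l (𝓝 0)) : Tendsto φ l (𝓝 0) := by
  rw [Metric.tendsto_nhds]
  intro ε hε
  have hmin : 0 < min (V ε) (V (-ε)) := lt_min (hpos ε hε.ne') (hpos (-ε) (by simp [hε.ne']))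
  filter_upwards [h.eventually (gt_mem_nhds hmin)] with t ht
  rw [Real.dist_eq, sub_zero, abs_lt]
  constructor
  · by_contra! hφt
    exact (ht.trans_le (min_le_right _ _)).not_ge
      (hanti (hφt.trans (neg_nonpos.2 hε.le)) (neg_nonpos.2 hε.le) hφt)
  · by_contra! hφt
    exact (ht.trans_le (min_le_left _ _)).not_ge
      (hmono hε.le (hε.le.trans hφt) hφt)

theorem tendsto_atTop_of_tendsto_potential {t₀ L : ℝ} {g y F : ℝ → ℝ}
    (hV : StrictMonoOn V (Ici 0)) (hV0 : ContinuousAt V 0) (hL : V 0 < L)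
    (hg : ContinuousOn g (Ioi 0)) (hgpos : ∀ s, 0 < s → 0 < g s)
    (hy : ∀ t ∈ Ici t₀, HasDerivWithinAt y (-F t - g (φ t)) (Ici t₀) t)
    (hF : Tendsto F atTop (𝓝 0)) (hy0 : Tendsto y atTop (𝓝 0))
    (hφ : ∀ᶠ t in atTop, 0 ≤ φ t) (hVφ : Tendsto (fun t => V (φ t)) atTop (𝓝 L)) :
    Tendsto φ atTop atTop := by
  by_contra hφtop
  obtain ⟨a, hVa, ha⟩ : ∃ a, V a < L ∧ 0 < a :=
    ((hV0.eventually (gt_mem_nhds hL)).filter_mono nhdsWithin_le_nhds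
      |>.and (self_mem_nhdsWithin : Ioi (0 : ℝ) ∈ 𝓝[>] 0)).exists
  simp only [tendsto_atTop, not_forall, not_eventually, not_le] at hφtop
  obtain ⟨b, hb⟩ := hφtop
  have hb' : ∃ᶠ t in atTop, V (φ t) ≤ V (max a b) :=
    (hb.and_eventually hφ).mono fun t ⟨hφb, hφ0⟩ =>
      hV.monotoneOn hφ0 (ha.le.trans (le_max_left a b)) (hφb.le.trans (le_max_right a b))
  obtain ⟨c, hac, hLc⟩ : ∃ c, a < c ∧ L < V c :=
    ⟨max a b + 1, by linarith [le_max_left a b], (le_of_tendsto_of_frequently hVφ hb').trans_lt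
      (hV (ha.le.trans (le_max_left a b)) (mem_Ici.2 (by linarith [le_max_left a b]))
        (lt_add_one _))⟩
  -- `V ∘ φ` is eventually trapped in `(V a, V c)`, hence `φ` in the compact set `[a, c] ⊆ (0, ∞)`.
  have htrap : ∀ᶠ t in atTop, φ t ∈ Icc a c := by
    filter_upwards [hVφ.eventually (lt_mem_nhds hVa), hVφ.eventually (gt_mem_nhds hLc), hφ]
      with t h₁ h₂ h₃
    exact ⟨(hV.lt_iff_lt ha.le h₃).1 h₁ |>.le,
      ((hV.lt_iff_lt h₃ (ha.trans hac).le).1 h₂).le⟩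
  obtain ⟨s, hs, hmin⟩ := isCompact_Icc.exists_isMinOn (nonempty_Icc.2 hac.le)
    (hg.mono fun r hr => ha.trans_le hr.1)
  have hm : 0 < g s := hgpos s (ha.trans_le hs.1)
  have hdown : ∀ᶠ t in atTop, -F t - g (φ t) ≤ -(g s / 2) := by
    filter_upwards [htrap, hF.eventually (lt_mem_nhds (neg_lt_zero.2 (half_pos hm)))]
      with t h₁ h₂
    have hgφ : g s ≤ g (φ t) := hmin h₁
    linarith
  exact (tendsto_atBot_of_hasDerivWithinAt_le_neg hy (half_pos hm) hdown).not_tendsto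
    (disjoint_nhds_atBot 0).symm hy0

theorem tendsto_atTop_or_atBot_or_nhds_zero {t₀ L : ℝ} {y F : ℝ → ℝ} (hV : ContDiff ℝ 1 V)
    (hV0 : V 0 = 0) (hV'pos : ∀ s : ℝ, 0 < s → 0 < deriv V s)
    (hV'neg : ∀ s : ℝ, s < 0 → deriv V s < 0) (hφ : ContinuousOn φ (Ici t₀))
    (hy : ∀ t ∈ Ici t₀, HasDerivWithinAt y (-F t - deriv V (φ t)) (Ici t₀) t)
    (hF : Tendsto F atTop (𝓝 0)) (hy0 : Tendsto y atTop (𝓝 0))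
    (hVφ : Tendsto (fun t => V (φ t)) atTop (𝓝 L)) :
    Tendsto φ atTop atTop ∨ Tendsto φ atTop atBot ∨ Tendsto φ atTop (𝓝 0) := by
  have hV' : Continuous (deriv V) := hV.continuous_deriv le_rfl
  have hmono : StrictMonoOn V (Ici 0) :=
    strictMonoOn_of_deriv_pos (convex_Ici 0) hV.continuous.continuousOn
      (by simpa using hV'pos)
  have hanti : StrictAntiOn V (Iic 0) :=
    strictAntiOn_of_deriv_neg (convex_Iic 0) hV.continuous.continuousOn
      (by simpa using hV'neg)
  have hVpos : ∀ s ≠ 0, 0 < V s := fun s hs => hs.lt_or_gt.elim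
    (fun h => hV0 ▸ hanti h.le self_mem_Iic h) (fun h => hV0 ▸ hmono self_mem_Ici h.le h)
  have hL : 0 ≤ L := ge_of_tendsto' hVφ fun t =>
    (eq_or_ne (φ t) 0).elim (fun h => by rw [h, hV0]) fun h => (hVpos _ h).le
  rcases hL.eq_or_lt with rfl | hL
  · exact Or.inr (Or.inr (tendsto_zero_of_tendsto_comp_zero hmono.monotoneOn
      hanti.antitoneOn hVpos hVφ))
  have hne : ∀ᶠ t in atTop, φ t ≠ 0 := by
    filter_upwards [hVφ.eventually (lt_mem_nhds hL)] with t ht h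
    rw [h, hV0] at ht
    exact ht.false
  obtain ⟨T, hT⟩ := eventually_atTop.1 (hne.and (eventually_ge_atTop t₀))
  -- Once `φ` avoids `0` it keeps one sign; the negative case is the positive one for `-φ`.
  rcases isPreconnected_Ici.pos_or_neg_of_ne_zero (hφ.mono (Ici_subset_Ici.2 (hT T le_rfl).2))
    fun t ht => (hT t ht).1 with hpos | hneg
  · exact Or.inl (tendsto_atTop_of_tendsto_potential hmono hV.continuous.continuousAt
      (by rwa [hV0]) hV'.continuousOn hV'pos hy hF hy0
      (eventually_atTop.2 ⟨T, fun t ht => (hpos t ht).le⟩) hVφ)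
  · refine Or.inr (Or.inl (tendsto_neg_atTop_iff.1 ?_))
    refine tendsto_atTop_of_tendsto_potential (V := fun s => V (-s))
      (g := fun s => -deriv V (-s)) (y := fun t => -y t) (F := fun t => -F t)
      (fun a ha b hb hab => hanti (mem_Iic.2 (neg_nonpos.2 hb)) (mem_Iic.2 (neg_nonpos.2 ha))
        (neg_lt_neg hab))
      (hV.continuous.comp continuous_neg).continuousAt (by simpa [hV0] using hL)
      (hV'.comp continuous_neg).neg.continuousOn
      (fun s hs => neg_pos.2 (hV'neg _ (neg_neg_of_pos hs)))
      (fun t ht => (hy t ht).neg.congr_deriv (by simp only [neg_neg]; ring))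
      (by simpa using hF.neg) (by simpa using hy0.neg)
      (eventually_atTop.2 ⟨T, fun t ht => (neg_pos.2 (hneg t ht)).le⟩) (by simpa using hVφ)

end Potential

section Energy

variable {V φ y : ℝ → ℝ}

noncomputable def energy (V φ y : ℝ → ℝ) (t : ℝ) : ℝ := 1 / 2 * y t ^ 2 + V (φ t)

theorem hasDerivWithinAt_energy_s16 {s : Set ℝ} {t k : ℝ} (hV : DifferentiableAt ℝ V (φ t))
    (hφ : HasDerivWithinAt φ (y t) s t) (hy : HasDerivWithinAt y (k * y t - deriv V (φ t)) s t) :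
    HasDerivWithinAt (energy V φ y) (k * y t ^ 2) s t :=
  (((hy.pow 2).const_mul (1 / 2)).add (hV.hasDerivAt.comp_hasDerivWithinAt t hφ)).congr_deriv
    (by push_cast; ring)

theorem exists_tendsto_potential_of_antitoneOn_energy {t₀ : ℝ} (hVnn : ∀ s, 0 ≤ V s)
    (hE : AntitoneOn (energy V φ y) (Ici t₀)) (hy0 : Tendsto y atTop (𝓝 0)) :
    ∃ L, Tendsto (fun t => V (φ t)) atTop (𝓝 L) := by
  obtain ⟨L, hL⟩ := hE.exists_tendsto_atTop_s16
    ⟨0, forall_mem_image.2 fun t _ => add_nonneg (by positivity) (hVnn _)⟩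
  refine ⟨L, ?_⟩
  have := hL.sub ((hy0.pow 2).const_mul (1 / 2))
  simp only [energy, add_sub_cancel_left] at this
  simpa using this

theorem exists_abs_le_of_energy_le {s : Set ℝ} {k : ℝ → ℝ} {E₀ K : ℝ} (hVnn : ∀ s, 0 ≤ V s)
    (hV'bdd : ∀ A : Set ℝ, Bornology.IsBounded (V '' A) → Bornology.IsBounded (deriv V '' A))
    (hE : ∀ t ∈ s, energy V φ y t ≤ E₀) (hk : ∀ t ∈ s, |k t| ≤ K) :
    ∃ C, ∀ t ∈ s, |k t * y t - deriv V (φ t)| ≤ C := by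
  have hE' : ∀ t ∈ s, 1 / 2 * y t ^ 2 + V (φ t) ≤ E₀ := hE
  have hVbdd : Bornology.IsBounded (V '' (φ '' s)) := by
    refine (Metric.isBounded_Icc 0 E₀).subset ?_
    rintro _ ⟨_, ⟨t, ht, rfl⟩, rfl⟩
    exact ⟨hVnn _, by nlinarith [hE' t ht, sq_nonneg (y t)]⟩
  obtain ⟨M, hM⟩ := isBounded_iff_forall_norm_le.1 (hV'bdd _ hVbdd)
  refine ⟨K * (E₀ + 1) + M, fun t ht => ?_⟩
  have hy : |y t| ≤ E₀ + 1 := by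
    nlinarith [hE' t ht, hVnn (φ t), sq_abs (y t), sq_nonneg (|y t| - 1)]
  have hV' : |deriv V (φ t)| ≤ M := hM _ ⟨φ t, ⟨t, ht, rfl⟩, rfl⟩
  calc |k t * y t - deriv V (φ t)| ≤ |k t| * |y t| + |deriv V (φ t)| := by
        rw [← abs_mul]; exact abs_sub _ _
    _ ≤ K * (E₀ + 1) + M := by
        gcongr
        · exact (abs_nonneg _).trans (hk t ht)
        · exact hk t ht

end Energy

theorem stmt_16_general (t₀ γ : ℝ) (hγ0 : 0 < γ)
    (V : ℝ → ℝ) (hV : ContDiff ℝ 2 V)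
    (x φ y ρ H : ℝ → ℝ)
    (hφ : ∀ t ∈ Set.Ici t₀, HasDerivWithinAt φ (y t) (Set.Ici t₀) t)
    (hy : ∀ t ∈ Set.Ici t₀,
      HasDerivWithinAt y (-3 * H t * y t - deriv V (φ t)) (Set.Ici t₀) t)
    (hH : ∀ t ∈ Set.Ici t₀,
      HasDerivWithinAt H (-(1 / 2) * y t ^ 2 - γ / 2 * ρ t - x t ^ 2) (Set.Ici t₀) t)
    (hρ0 : ∀ t ∈ Set.Ici t₀, 0 ≤ ρ t)
    (hxpos : ∀ t ∈ Set.Ici t₀, 0 < x t)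
    (hcon : ∀ t ∈ Set.Ici t₀,
      3 * H t ^ 2 - 3 * x t ^ 2 = ρ t + 1 / 2 * y t ^ 2 + V (φ t))
    (hVnn : ∀ s : ℝ, 0 ≤ V s)
    (hVzero : ∀ s : ℝ, V s = 0 ↔ s = 0)
    (hV'bdd : ∀ A : Set ℝ, Bornology.IsBounded (V '' A) →
      Bornology.IsBounded (deriv V '' A))
    (hV'pos : ∀ s : ℝ, 0 < s → 0 < deriv V s)
    (hV'neg : ∀ s : ℝ, s < 0 → deriv V s < 0)
    (hH0 : 0 < H t₀) :
    (Tendsto φ atTop atTop ∧ ¬ Tendsto φ atTop atBot ∧ ¬ Tendsto φ atTop (nhds 0)) ∨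
    (Tendsto φ atTop atBot ∧ ¬ Tendsto φ atTop atTop ∧ ¬ Tendsto φ atTop (nhds 0)) ∨
    (Tendsto φ atTop (nhds 0) ∧ ¬ Tendsto φ atTop atTop ∧ ¬ Tendsto φ atTop atBot) := by
  have hHpos : ∀ t ∈ Ici t₀, 0 < H t :=
    (isPreconnected_Ici.pos_or_neg_of_ne_zero (fun t ht => (hH t ht).continuousWithinAt)
      fun t ht h0 => by
        nlinarith [hcon t ht, hxpos t ht, hρ0 t ht, hVnn (φ t), sq_nonneg (y t)]).resolve_right
      fun h => (h t₀ self_mem_Ici).not_gt hH0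
  have hH' : ∀ t ∈ Ici t₀, -(1 / 2) * y t ^ 2 - γ / 2 * ρ t - x t ^ 2 ≤ -(1 / 2) * y t ^ 2 :=
    fun t ht => by nlinarith [hρ0 t ht, sq_nonneg (x t)]
  have hHanti : AntitoneOn H (Ici t₀) :=
    antitoneOn_of_hasDerivWithinAt_Ici_nonpos hH (convex_Ici t₀) subset_rfl
      fun t ht => (hH' t ht).trans (by nlinarith [sq_nonneg (y t)])
  have hHbdd : BddBelow (H '' Ici t₀) := ⟨0, forall_mem_image.2 fun t ht => (hHpos t ht).le⟩
  have hEanti : AntitoneOn (energy V φ y) (Ici t₀) :=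
    antitoneOn_of_hasDerivWithinAt_Ici_nonpos
      (fun t ht => hasDerivWithinAt_energy_s16 ((hV.differentiable two_ne_zero).differentiableAt)
        (hφ t ht) (hy t ht)) (convex_Ici t₀) subset_rfl
      fun t ht => by nlinarith [hHpos t ht, sq_nonneg (y t)]
  obtain ⟨C, hC⟩ := exists_abs_le_of_energy_le (k := fun t => -3 * H t) (K := 3 * H t₀)
    hVnn hV'bdd (fun t ht => hEanti self_mem_Ici ht ht) fun t ht => by
      rw [abs_of_neg (by linarith [hHpos t ht])]
      linarith [hHanti self_mem_Ici ht ht]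
  have hy0 : Tendsto y atTop (𝓝 0) :=
    tendsto_zero_of_hasDerivWithinAt_le_neg_sq hy hC hH (by norm_num) hH' hHbdd
  obtain ⟨L, hL⟩ := exists_tendsto_potential_of_antitoneOn_energy hVnn hEanti hy0
  obtain ⟨l, hHl⟩ := hHanti.exists_tendsto_atTop_s16 hHbdd
  have hF : Tendsto (fun t => 3 * H t * y t) atTop (𝓝 0) := by
    simpa using (hHl.const_mul 3).mul hy0
  rcases tendsto_atTop_or_atBot_or_nhds_zero (hV.of_le one_le_two) ((hVzero 0).2 rfl) hV'pos
    hV'neg (fun t ht => (hφ t ht).continuousWithinAt)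
    (fun t ht => (hy t ht).congr_deriv (by ring)) hF hy0 hL with h | h | h
  · exact Or.inl ⟨h, h.not_tendsto disjoint_atTop_atBot,
      h.not_tendsto (disjoint_nhds_atTop 0).symm⟩
  · exact Or.inr (Or.inl ⟨h, h.not_tendsto disjoint_atBot_atTop,
      h.not_tendsto (disjoint_nhds_atBot 0).symm⟩)
  · exact Or.inr (Or.inr ⟨h, h.not_tendsto (disjoint_nhds_atTop 0),
      h.not_tendsto (disjoint_nhds_atBot 0)⟩)

/-- Extension of Proposition 3 to negatively curved (`k = -1`) FRW models: under the same
assumptions on the potential (unique zero minimum at `0`, `V' > 0` for `φ > 0`,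
`V' < 0` for `φ < 0`, `V'` bounded wherever `V` is) and `H(t₀) > 0`, the scalar field
tends, as `t → ∞`, to exactly one of `+∞`, `-∞` or `0`. -/
theorem stmt_16 (t₀ γ : ℝ) (hγ0 : 0 < γ) (hγ2 : γ ≤ 2)
    (V : ℝ → ℝ) (hV : ContDiff ℝ 2 V)
    (x φ y ρ H : ℝ → ℝ)
    (hx : ∀ t ∈ Set.Ici t₀, HasDerivWithinAt x (-(H t) * x t) (Set.Ici t₀) t)
    (hφ : ∀ t ∈ Set.Ici t₀, HasDerivWithinAt φ (y t) (Set.Ici t₀) t)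
    (hy : ∀ t ∈ Set.Ici t₀,
      HasDerivWithinAt y (-3 * H t * y t - deriv V (φ t)) (Set.Ici t₀) t)
    (hρ : ∀ t ∈ Set.Ici t₀, HasDerivWithinAt ρ (-3 * γ * ρ t * H t) (Set.Ici t₀) t)
    (hH : ∀ t ∈ Set.Ici t₀,
      HasDerivWithinAt H (-(1 / 2) * y t ^ 2 - γ / 2 * ρ t - x t ^ 2) (Set.Ici t₀) t)
    (hρ0 : ∀ t ∈ Set.Ici t₀, 0 ≤ ρ t)
    (hxpos : ∀ t ∈ Set.Ici t₀, 0 < x t)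
    (hcon : ∀ t ∈ Set.Ici t₀,
      3 * H t ^ 2 - 3 * x t ^ 2 = ρ t + 1 / 2 * y t ^ 2 + V (φ t))
    (hVnn : ∀ s : ℝ, 0 ≤ V s)
    (hVzero : ∀ s : ℝ, V s = 0 ↔ s = 0)
    (hV'bdd : ∀ A : Set ℝ, Bornology.IsBounded (V '' A) →
      Bornology.IsBounded (deriv V '' A))
    (hV'pos : ∀ s : ℝ, 0 < s → 0 < deriv V s)
    (hV'neg : ∀ s : ℝ, s < 0 → deriv V s < 0)
    (hH0 : 0 < H t₀) :
    (Tendsto φ atTop atTop ∧ ¬ Tendsto φ atTop atBot ∧ ¬ Tendsto φ atTop (nhds 0)) ∨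
    (Tendsto φ atTop atBot ∧ ¬ Tendsto φ atTop atTop ∧ ¬ Tendsto φ atTop (nhds 0)) ∨
    (Tendsto φ atTop (nhds 0) ∧ ¬ Tendsto φ atTop atTop ∧ ¬ Tendsto φ atTop atBot) :=
  stmt_16_general t₀ γ hγ0 V hV x φ y ρ H hφ hy hH hρ0 hxpos hcon hVnn hVzero hV'bdd hV'pos hV'neg
    hH0
end
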